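/- arXiv:2501.10897 — 5 statements merged into one kernel-verified Lean document; each statement's English description precedes it below -/
import Mathlib

section
/- In the discrete latent bipartite graphical model, suppose J ≥ 2K, ν(a) > 0 for all a ∈ {0,…,H−1}^K, Assumptions 1 and 2 hold, and the first 2K rows of G consist of two copies of the identity: co(j) = {j} for 1 ≤ j ≤ K and co(j) = {j − K} for K+1 ≤ j ≤ 2K. Then for every k ∈ [K] and every j ∈ {2K+1,…,J} with |co(j)| ≥ 2: rank([T]_{([K]∖{k}) ∪ {j}, {K+1,…,2K}}) > H^{K−1} if and only if k ∈ co(j). -/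
open Matrix MeasureTheory

namespace LBGM

/-- The set of latent variables connected to observed variable `j`. -/
def co {J K : ℕ} (G : Fin J → Fin K → Bool) (j : Fin J) : Finset (Fin K) :=
  Finset.univ.filter (fun k => G j k = true)

/-- The set of latent variables connected to some observed variable in `S`. -/
def coS {J K : ℕ} (G : Fin J → Fin K → Bool) (S : Finset (Fin J)) : Finset (Fin K) :=
  S.biUnion (co G)

/-- `θ j` depends only on the latent coordinates in `co G j`. -/
def DependsOnlyOnCo {J K V H : ℕ} (G : Fin J → Fin K → Bool)
    (θ : Fin J → (Fin K → Fin H) → Fin V → ℝ) : Prop :=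
  ∀ (j : Fin J) (a a' : Fin K → Fin H), (∀ k ∈ co G j, a k = a' k) → θ j a = θ j a'

/-- Every `θ j (· | a)` is a probability vector on `{0,…,V-1}`. -/
def IsCPT {J K V H : ℕ} (θ : Fin J → (Fin K → Fin H) → Fin V → ℝ) : Prop :=
  ∀ j a, (∀ v, 0 ≤ θ j a v) ∧ (∑ v, θ j a v) = 1

/-- `ν` is a probability mass function on `{0,…,H-1}^K`. -/
def IsPMF {K H : ℕ} (ν : (Fin K → Fin H) → ℝ) : Prop :=
  (∀ a, 0 ≤ ν a) ∧ (∑ a, ν a) = 1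

/-- Induced joint pmf of the observed vector `Y`. -/
noncomputable def jointP {J K V H : ℕ} (ν : (Fin K → Fin H) → ℝ)
    (θ : Fin J → (Fin K → Fin H) → Fin V → ℝ) (y : Fin J → Fin V) : ℝ :=
  ∑ a : Fin K → Fin H, ν a * ∏ j, θ j a (y j)

/-- Extend a latent configuration on `S` to all of `[K]`, filling in `0` elsewhere. -/
def extendA {K H : ℕ} [NeZero H] (S : Finset (Fin K)) (a : {k // k ∈ S} → Fin H) :
    Fin K → Fin H :=
  fun k => if h : k ∈ S then a ⟨k, h⟩ else 0

/-- Conditional probability table `P(Y_M | A_S)`. -/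
noncomputable def cpt {J K V H : ℕ} [NeZero H]
    (θ : Fin J → (Fin K → Fin H) → Fin V → ℝ)
    (M : Finset (Fin J)) (S : Finset (Fin K)) :
    Matrix ({j // j ∈ M} → Fin V) ({k // k ∈ S} → Fin H) ℝ :=
  Matrix.of fun y a => ∏ j : {j // j ∈ M}, θ j.1 (extendA S a) (y j)

/-- Unfolded tensor `[T]_{S₁,S₂}`: the matrix of joint marginal probabilities of
`Y_{S₁}` and `Y_{S₂}`. -/
noncomputable def unfoldT {J K V H : ℕ} (ν : (Fin K → Fin H) → ℝ)
    (θ : Fin J → (Fin K → Fin H) → Fin V → ℝ) (S₁ S₂ : Finset (Fin J)) :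
    Matrix ({j // j ∈ S₁} → Fin V) ({j // j ∈ S₂} → Fin V) ℝ :=
  Matrix.of fun r c => ∑ y : Fin J → Fin V,
    if (∀ j : {j // j ∈ S₁}, y j.1 = r j) ∧ (∀ j : {j // j ∈ S₂}, y j.1 = c j)
      then jointP ν θ y else 0

/-- `[T]_{S,:} = [T]_{S, [J]∖S}`. -/
noncomputable def unfoldRow {J K V H : ℕ} (ν : (Fin K → Fin H) → ℝ)
    (θ : Fin J → (Fin K → Fin H) → Fin V → ℝ) (S : Finset (Fin J)) :
    Matrix ({j // j ∈ S} → Fin V) ({j // j ∈ Sᶜ} → Fin V) ℝ :=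
  unfoldT ν θ S Sᶜ

/-- Marginal pmf of `Y_S`. -/
noncomputable def marginalP {J K V H : ℕ} (ν : (Fin K → Fin H) → ℝ)
    (θ : Fin J → (Fin K → Fin H) → Fin V → ℝ) (S : Finset (Fin J))
    (r : {j // j ∈ S} → Fin V) : ℝ :=
  ∑ y : Fin J → Fin V, if ∀ j : {j // j ∈ S}, y j.1 = r j then jointP ν θ y else 0

/-- Assumption 1: single-parent CPTs have full column rank `H`. -/
def Assumption1 {J K V H : ℕ} [NeZero H] (G : Fin J → Fin K → Bool)
    (θ : Fin J → (Fin K → Fin H) → Fin V → ℝ) : Prop :=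
  ∀ j : Fin J, (co G j).card = 1 → (cpt θ {j} (co G j)).rank = H

/-- Assumption 2: each connected latent variable makes a difference. -/
def Assumption2 {J K V H : ℕ} (G : Fin J → Fin K → Bool)
    (θ : Fin J → (Fin K → Fin H) → Fin V → ℝ) : Prop :=
  ∀ j : Fin J, ∀ k ∈ co G j, ∃ a : Fin K → Fin H, ∃ h h' : Fin H,
    θ j (Function.update a k h) ≠ θ j (Function.update a k h')

/-- Pure-child graph condition: every observed variable has a parent and every
latent variable has at least two pure children. -/
def PureChild {J K : ℕ} (G : Fin J → Fin K → Bool) : Prop :=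
  (∀ j, (co G j).Nonempty) ∧
    ∀ k : Fin K,
      2 ≤ (Finset.univ.filter (fun j => co G j = ({k} : Finset (Fin K)))).card

/-- Pairwise rank condition (paper's Lemma 3 conclusion, holding generically). -/
def PairwiseRank {J K V H : ℕ} [NeZero H] (G : Fin J → Fin K → Bool)
    (θ : Fin J → (Fin K → Fin H) → Fin V → ℝ) : Prop :=
  ∀ j₁ j₂ : Fin J, j₁ ≠ j₂ → (¬ ∃ k : Fin K, co G j₁ ∪ co G j₂ = {k}) →
    H < (cpt θ ({j₁, j₂} : Finset (Fin J)) (co G j₁ ∪ co G j₂)).rank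

/-- Khatri–Rao (column-wise Kronecker) product. -/
noncomputable def khatriRao {I J R : ℕ} (A : Matrix (Fin I) (Fin R) ℝ)
    (B : Matrix (Fin J) (Fin R) ℝ) : Matrix (Fin I × Fin J) (Fin R) ℝ :=
  Matrix.of fun p r => A p.1 r * B p.2 r

/-- Kruskal rank: the largest `r` such that every `r` columns are linearly
independent. -/
noncomputable def krank {I R : ℕ} (A : Matrix (Fin I) (Fin R) ℝ) : ℕ :=
  @Nat.findGreatest
    (fun r => ∀ s : Finset (Fin R), s.card = r →
      LinearIndependent ℝ (fun j : {x // x ∈ s} => (fun i => A i j.1)))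
    (Classical.decPred _) R

/-- The joint probability table `P(A_S, A)`. -/
noncomputable def jointLatent {K H : ℕ} (ν : (Fin K → Fin H) → ℝ) (S : Finset (Fin K)) :
    Matrix ({k // k ∈ S} → Fin H) (Fin K → Fin H) ℝ :=
  Matrix.of fun a b => if ∀ k : {k // k ∈ S}, b k.1 = a k then ν b else 0

/-- A family of `m` pairwise disjoint subsets of observed variables witnessing the
rank certificate of Proposition 1. -/
def GoodFamily {J K V H : ℕ} [NeZero H] (ν : (Fin K → Fin H) → ℝ)
    (θ : Fin J → (Fin K → Fin H) → Fin V → ℝ) (m : ℕ) : Prop :=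
  ∃ S : Fin m → Finset (Fin J),
    (∀ l l', l ≠ l' → Disjoint (S l) (S l')) ∧
    (∀ l, 2 ≤ (S l).card) ∧
    (∀ l, ∀ j₁ ∈ S l, ∀ j₂ ∈ S l, j₁ ≠ j₂ →
      (unfoldRow ν θ ({j₁, j₂} : Finset (Fin J))).rank ≤ H) ∧
    (∀ l l', l ≠ l' → ∀ j₁ ∈ S l, ∀ j₂ ∈ S l',
      H < (unfoldRow ν θ ({j₁, j₂} : Finset (Fin J))).rank)

/-- Index type for the free parameters of the pair `(θ_{j₁}, θ_{j₂})`: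
for each `j ∈ {j₁,j₂}`, each latent configuration on `co G j`, and each
`v ∈ {0,…,V-2}` one real parameter (the `v = V-1` entry is determined by
normalization). -/
abbrev ParamIx (V H : ℕ) {J K : ℕ} (G : Fin J → Fin K → Bool) (j₁ j₂ : Fin J) : Type :=
  Σ j : {j // j ∈ ({j₁, j₂} : Finset (Fin J))},
    (({k // k ∈ co G j.1} → Fin H) × Fin (V - 1))

/-- The conditional probability tables determined by a parameter point
`x : ℝ^D`. -/
noncomputable def thetaOf {J K : ℕ} (V H : ℕ) [NeZero H] [NeZero V]
    (G : Fin J → Fin K → Bool) (j₁ j₂ : Fin J)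
    (x : ParamIx V H G j₁ j₂ → ℝ) :
    Fin J → (Fin K → Fin H) → Fin V → ℝ :=
  fun j a v =>
    if hj : j ∈ ({j₁, j₂} : Finset (Fin J)) then
      if hv : v.1 < V - 1 then
        x ⟨⟨j, hj⟩, (fun k => a k.1, ⟨v.1, hv⟩)⟩
      else 1 - ∑ v' : Fin (V - 1), x ⟨⟨j, hj⟩, (fun k => a k.1, v')⟩
    else if v = 0 then 1 else 0

/-!
Marginalising over the latent variables factors the unfolding as
`[T]_{S₁,S₂} = P(Y_{S₁} | A) · diag ν · P(Y_{S₂} | A)ᵀ`, with `S₁ = ([K]∖{k}) ∪ {j}` and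
`S₂ = {K+1,…,2K}`. If `k ∉ co(j)`, no column of `P(Y_{S₁} | A)` depends on `A_k`, so the rank is at
most `H^{K-1}`. If `k ∈ co(j)`, the pure children in `S₂` give `P(Y_{S₂} | A)` a left inverse, and
the pure children of `A_{[K]∖{k}}` in `S₁` give a left factor turning `P(Y_{S₁} | A)` into the
matrix whose column `a` is `θ_j(· | a)` placed in the block of `a|_{[K]∖{k}}`. Every block is
nonzero, and by Assumption 2 one block holds two distinct probability vectors, so the rank is at
least `H^{K-1} + 1`.
-/

theorem exists_mul_eq_one_of_rank_eq_card {m n 𝕜 : Type*} [Fintype m] [Fintype n]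
    [DecidableEq m] [DecidableEq n] [Field 𝕜] (A : Matrix m n 𝕜)
    (h : A.rank = Fintype.card n) : ∃ B : Matrix n m 𝕜, B * A = 1 := by
  have hker : LinearMap.ker A.mulVecLin = ⊥ := by
    have := A.mulVecLin.finrank_range_add_finrank_ker
    rw [Module.finrank_fintype_fun_eq_card] at this
    exact Submodule.finrank_eq_zero.mp (by rw [Matrix.rank] at h; omega)
  obtain ⟨g, hg⟩ := A.mulVecLin.exists_leftInverse_of_injective hker
  refine ⟨LinearMap.toMatrix' g, ?_⟩
  rw [← LinearMap.toMatrix'_toLin' A, ← LinearMap.toMatrix'_comp, Matrix.toLin'_apply',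
    hg, LinearMap.toMatrix'_id]

theorem linearIndependent_pair_of_sum_eq_one {ι : Type*} [Fintype ι] {x y : ι → ℝ}
    (hx : ∑ i, x i = 1) (hy : ∑ i, y i = 1) (hxy : x ≠ y) :
    LinearIndependent ℝ ![x, y] := by
  rw [LinearIndependent.pair_iff]
  intro s t hst
  have hsum : s + t = 0 := by
    simpa [Finset.sum_add_distrib, ← Finset.mul_sum, hx, hy] using
      congrArg (fun z : ι → ℝ => ∑ i, z i) hst
  obtain rfl : t = -s := by linarith
  have hs : s • (x - y) = 0 := by rw [smul_sub, sub_eq_add_neg, ← neg_smul]; exact hst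
  have hs0 : s = 0 := (smul_eq_zero.mp hs).resolve_right (sub_ne_zero.mpr hxy)
  exact ⟨hs0, by rw [hs0, neg_zero]⟩

theorem card_add_one_le_rank {α β γ : Type*} [Fintype α] [Fintype β] [Fintype γ]
    [DecidableEq β] (π : α → β) (hπ : Function.Surjective π) (w : α → γ → ℝ)
    (hw : ∀ a, w a ≠ 0) {a₁ a₂ : α} (h12 : π a₁ = π a₂)
    (hli : LinearIndependent ℝ ![w a₁, w a₂]) :
    Fintype.card β + 1 ≤
      (of fun (x : α × γ) a => if π x.1 = π a then w a x.2 else 0).rank := by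
  set X := of fun (x : α × γ) a => if π x.1 = π a then w a x.2 else 0
  set s := Function.update (Function.surjInv hπ) (π a₁) a₁
  have hs : ∀ b, π (s b) = b := fun b => by
    by_cases hb : b = π a₁
    · subst hb; simp [s]
    · simp [s, hb, Function.surjInv_eq hπ]
  have hs₁ : s (π a₁) = a₁ := by simp [s]
  set c : Option β → α := fun o => o.elim a₂ s
  -- on the rows `(s b, ·)`, the chosen columns combine to `g (some b) • w (s b)`, plus a
  -- multiple of `w a₂` in the single block `b = π a₂`
  have hcols : LinearIndependent ℝ (X.submatrix id c).col := by
    rw [Fintype.linearIndependent_iff]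
    intro g hg
    have hblock : ∀ b, g (some b) • w (s b) + (if b = π a₂ then g none else 0) • w a₂ = 0 := by
      intro b
      ext v
      have := congrFun hg (s b, v)
      simp only [Finset.sum_apply, Pi.smul_apply, col_apply, submatrix_apply, id, X, of_apply,
        hs, Fintype.sum_option, c, Option.elim, smul_eq_mul, mul_ite, mul_zero,
        Finset.sum_ite_eq, Finset.mem_univ, if_true] at this
      by_cases hb : b = π a₂ <;> simp_all [add_comm]
    have hnone : g (some (π a₂)) = 0 ∧ g none = 0 := by
      have := hblock (π a₂)
      rw [if_pos rfl, ← h12, hs₁] at this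
      rw [← h12]
      exact LinearIndependent.pair_iff.mp hli _ _ this
    rintro (_ | b)
    · exact hnone.2
    · by_cases hb : b = π a₂
      · exact hb ▸ hnone.1
      · have := hblock b
        rw [if_neg hb, zero_smul, add_zero] at this
        exact (smul_eq_zero.mp this).resolve_right (hw _)
  calc Fintype.card β + 1 = Fintype.card (Option β) := (Fintype.card_option).symm
    _ = (X.submatrix id c).rank := by
      rw [← rank_transpose, LinearIndependent.rank_matrix]; exact hcols
    _ ≤ X.rank := rank_submatrix_le _ _ _

section

variable {J K V H : ℕ}

/-- `P(Y_S | A)`, with columns indexed by full latent configurations. -/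
def condTable (θ : Fin J → (Fin K → Fin H) → Fin V → ℝ) (S : Finset (Fin J)) :
    Matrix ({j // j ∈ S} → Fin V) (Fin K → Fin H) ℝ :=
  of fun r a => ∏ i : {j // j ∈ S}, θ i.1 a (r i)

theorem unfoldT_eq_condTable_mul {θ : Fin J → (Fin K → Fin H) → Fin V → ℝ} (hcpt : IsCPT θ)
    (ν : (Fin K → Fin H) → ℝ) {S₁ S₂ : Finset (Fin J)} (hdisj : Disjoint S₁ S₂) :
    unfoldT ν θ S₁ S₂ = condTable θ S₁ * diagonal ν * (condTable θ S₂)ᵀ := by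
  classical
  ext r c
  -- the constraint `Y_{S₁} = r, Y_{S₂} = c` is a conjunction of constraints on single coordinates
  set p : Fin J → Fin V → Prop := fun i v =>
    (∀ h : i ∈ S₁, v = r ⟨i, h⟩) ∧ (∀ h : i ∈ S₂, v = c ⟨i, h⟩)
  have hp : ∀ y : Fin J → Fin V,
      ((∀ i : {j // j ∈ S₁}, y i.1 = r i) ∧ (∀ i : {j // j ∈ S₂}, y i.1 = c i)) ↔
        ∀ i, p i (y i) := fun y =>
    ⟨fun h i => ⟨fun hi => h.1 ⟨i, hi⟩, fun hi => h.2 ⟨i, hi⟩⟩,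
      fun h => ⟨fun i => (h i).1 i.2, fun i => (h i).2 i.2⟩⟩
  have hmarg : ∀ a i, ∑ v, (if p i v then θ i a v else 0) =
      (if h : i ∈ S₁ then θ i a (r ⟨i, h⟩) else 1) *
        (if h : i ∈ S₂ then θ i a (c ⟨i, h⟩) else 1) := by
    intro a i
    by_cases h₁ : i ∈ S₁
    · have h₂ : i ∉ S₂ := Finset.disjoint_left.mp hdisj h₁
      simp [p, h₁, h₂]
    · by_cases h₂ : i ∈ S₂
      · simp [p, h₁, h₂]
      · simp [p, h₁, h₂, (hcpt i a).2]
  calc unfoldT ν θ S₁ S₂ r c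
      = ∑ a, ν a * ∑ y : Fin J → Fin V, ∏ i, (if p i (y i) then θ i a (y i) else 0) := by
        simp only [unfoldT, jointP, of_apply, hp, Finset.mul_sum]
        rw [Finset.sum_comm]
        refine Finset.sum_congr rfl fun y _ => ?_
        by_cases hy : ∀ i, p i (y i)
        · simp [hy]
        · obtain ⟨i, hi⟩ := not_forall.mp hy
          rw [if_neg hy]
          exact (Finset.sum_eq_zero fun a _ => by
            rw [Finset.prod_eq_zero (Finset.mem_univ i) (if_neg hi), mul_zero]).symm
    _ = ∑ a, ν a * ∏ i, ∑ v, (if p i v then θ i a v else 0) := by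
        simp only [Fintype.prod_sum]
    _ = _ := by
        rw [mul_apply]
        simp only [mul_diagonal, transpose_apply, condTable, of_apply, Finset.univ_eq_attach,
          Finset.prod_attach_eq_prod_dite, hmarg, Finset.prod_mul_distrib]
        exact Finset.sum_congr rfl fun a _ => by ring

theorem exists_left_inverse_of_co_eq_singleton [NeZero H] {G : Fin J → Fin K → Bool}
    {θ : Fin J → (Fin K → Fin H) → Fin V → ℝ} (hdep : DependsOnlyOnCo G θ)
    (hA1 : Assumption1 G θ) {i : Fin J} {κ : Fin K} (hco : co G i = {κ}) :
    ∃ φ : Fin H → Fin V → ℝ, ∀ h a, ∑ v, φ h v * θ i a v = if h = a κ then 1 else 0 := by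
  classical
  set F : Matrix (Fin V) (Fin H) ℝ := of fun v h => θ i (fun _ => h) v
  have hconst : ∀ a, θ i a = θ i (fun _ => a κ) := fun a => hdep i _ _ (by simp [hco])
  have hF : F.rank = Fintype.card (Fin H) := by
    have hcpt : cpt θ {i} {κ} =
        F.submatrix (Equiv.funUnique _ _) (Equiv.funUnique _ _) := by
      ext y c
      simp only [cpt, F, of_apply, submatrix_apply, Equiv.funUnique_apply, Fintype.prod_unique]
      change θ i (extendA {κ} c) _ = _
      rw [hconst]
      simp only [extendA, Finset.mem_singleton_self, dif_pos]
      rfl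
    have := hA1 i (by rw [hco, Finset.card_singleton])
    rw [hco, hcpt, rank_submatrix] at this
    rw [this, Fintype.card_fin]
  obtain ⟨B, hB⟩ := exists_mul_eq_one_of_rank_eq_card F hF
  refine ⟨B, fun h a => ?_⟩
  have := congrFun (congrFun hB h) (a κ)
  rw [mul_apply, one_apply] at this
  simpa [hconst a, F] using this

theorem exists_left_inverse_of_single_parent [NeZero H] {G : Fin J → Fin K → Bool}
    {θ : Fin J → (Fin K → Fin H) → Fin V → ℝ} (hdep : DependsOnlyOnCo G θ)
    (hA1 : Assumption1 G θ) :
    ∃ φ : Fin J → (Fin K → Fin H) → Fin V → ℝ, ∀ i, (co G i).card = 1 → ∀ a₀ a,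
      ∑ v, φ i a₀ v * θ i a v = if ∀ m ∈ co G i, a₀ m = a m then 1 else 0 := by
  have (i : Fin J) : ∃ ψ : (Fin K → Fin H) → Fin V → ℝ, (co G i).card = 1 → ∀ a₀ a,
      ∑ v, ψ a₀ v * θ i a v = if ∀ m ∈ co G i, a₀ m = a m then 1 else 0 := by
    by_cases hi : (co G i).card = 1
    · obtain ⟨κ, hκ⟩ := Finset.card_eq_one.mp hi
      obtain ⟨φ, hφ⟩ := exists_left_inverse_of_co_eq_singleton hdep hA1 hκ
      exact ⟨fun a₀ => φ (a₀ κ), fun _ a₀ a => by simp [hφ, hκ]⟩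
    · exact ⟨0, fun h => absurd h hi⟩
  choose φ hφ using this
  exact ⟨φ, hφ⟩

theorem of_prod_mul_condTable_apply {ι : Type*} (θ : Fin J → (Fin K → Fin H) → Fin V → ℝ)
    (S : Finset (Fin J)) (ψ : ι → Fin J → Fin V → ℝ) (x : ι) (a : Fin K → Fin H) :
    ((of fun x (r : {j // j ∈ S} → Fin V) => ∏ i : {j // j ∈ S}, ψ x i (r i)) *
      condTable θ S) x a =
      ∏ i ∈ S, ∑ v, ψ x i v * θ i a v := by
  classical
  rw [← Finset.prod_coe_sort S fun i => ∑ v, ψ x i v * θ i a v, Fintype.prod_sum]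
  simp only [mul_apply, condTable, of_apply, ← Finset.prod_mul_distrib]

theorem prod_left_inverse_eq {G : Fin J → Fin K → Bool} {θ : Fin J → (Fin K → Fin H) → Fin V → ℝ}
    {φ : Fin J → (Fin K → Fin H) → Fin V → ℝ}
    (hφ : ∀ i, (co G i).card = 1 → ∀ a₀ a,
      ∑ v, φ i a₀ v * θ i a v = if ∀ m ∈ co G i, a₀ m = a m then 1 else 0)
    {S : Finset (Fin J)} (hS : ∀ i ∈ S, (co G i).card = 1) (a₀ a : Fin K → Fin H) :
    ∏ i ∈ S, ∑ v, φ i a₀ v * θ i a v = if ∀ m ∈ coS G S, a₀ m = a m then 1 else 0 := by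
  have hagree : (∀ i ∈ S, ∀ m ∈ co G i, a₀ m = a m) ↔ ∀ m ∈ coS G S, a₀ m = a m := by
    simp only [coS, Finset.mem_biUnion, forall_exists_index, and_imp]
    exact ⟨fun h m i hi hm => h i hi m hm, fun h i hi m hm => h m i hi hm⟩
  rw [Finset.prod_congr rfl fun i hi => hφ i (hS i hi) a₀ a, Finset.prod_boole]
  simp only [hagree]

theorem card_fun_subtype_ne (k : Fin K) :
    Fintype.card ({m : Fin K // m ≠ k} → Fin H) = H ^ (K - 1) := by
  simp [Fintype.card_subtype_compl]

theorem rank_unfoldT_le [NeZero H] {G : Fin J → Fin K → Bool}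
    {θ : Fin J → (Fin K → Fin H) → Fin V → ℝ} (hdep : DependsOnlyOnCo G θ) (hcpt : IsCPT θ)
    (ν : (Fin K → Fin H) → ℝ) {S₁ S₂ : Finset (Fin J)} (hdisj : Disjoint S₁ S₂) {k : Fin K}
    (hk : k ∉ coS G S₁) :
    (unfoldT ν θ S₁ S₂).rank ≤ H ^ (K - 1) := by
  set π : (Fin K → Fin H) → ({m : Fin K // m ≠ k} → Fin H) := Subtype.restrict (· ≠ k)
  have hπ : Function.Surjective π := Subtype.surjective_restrict _
  set s := Function.surjInv hπ
  set P := condTable θ S₁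
  have hfactor : P = (P.submatrix id s).submatrix id π := by
    ext r a
    refine Finset.prod_congr rfl fun i _ => ?_
    have hagree : ∀ m ∈ co G i, a m = s (π a) m := fun m hm => by
      have hmk : m ≠ k := fun h => hk (h ▸ Finset.mem_biUnion.mpr ⟨i, i.2, hm⟩)
      exact (congrFun (Function.surjInv_eq hπ (π a)) ⟨m, hmk⟩).symm
    rw [hdep i a (s (π a)) hagree]
    rfl
  calc (unfoldT ν θ S₁ S₂).rank = (P * (diagonal ν * (condTable θ S₂)ᵀ)).rank := by
        rw [unfoldT_eq_condTable_mul hcpt ν hdisj, Matrix.mul_assoc]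
    _ ≤ P.rank := rank_mul_le_left _ _
    _ = ((P.submatrix id s).submatrix id π).rank := by rw [← hfactor]
    _ ≤ (P.submatrix id s).rank := rank_submatrix_le _ _ _
    _ ≤ Fintype.card ({m : Fin K // m ≠ k} → Fin H) := rank_le_card_width _
    _ = H ^ (K - 1) := card_fun_subtype_ne k

theorem exists_mul_condTable_eq_one [NeZero H] {G : Fin J → Fin K → Bool}
    {θ : Fin J → (Fin K → Fin H) → Fin V → ℝ} (hdep : DependsOnlyOnCo G θ)
    (hA1 : Assumption1 G θ) {S : Finset (Fin J)} (hpure : ∀ i ∈ S, (co G i).card = 1)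
    (hcov : coS G S = Finset.univ) :
    ∃ L : Matrix (Fin K → Fin H) ({i // i ∈ S} → Fin V) ℝ, L * condTable θ S = 1 := by
  classical
  obtain ⟨φ, hφ⟩ := exists_left_inverse_of_single_parent hdep hA1
  refine ⟨of fun a₀ c => ∏ i : {i // i ∈ S}, φ i a₀ (c i), ?_⟩
  ext a₀ a
  refine (of_prod_mul_condTable_apply θ S (fun a₀ i => φ i a₀) a₀ a).trans ?_
  rw [prod_left_inverse_eq hφ hpure, hcov, one_apply]
  simp [funext_iff]

theorem exists_mul_condTable_eq_restrict [NeZero H] {G : Fin J → Fin K → Bool}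
    {θ : Fin J → (Fin K → Fin H) → Fin V → ℝ} (hdep : DependsOnlyOnCo G θ)
    (hA1 : Assumption1 G θ) {S : Finset (Fin J)} {j : Fin J} {k : Fin K} (hj : j ∈ S)
    (hpure : ∀ i ∈ S.erase j, (co G i).card = 1) (hcov : coS G (S.erase j) = {k}ᶜ) :
    ∃ L : Matrix ((Fin K → Fin H) × Fin V) ({i // i ∈ S} → Fin V) ℝ,
      L * condTable θ S = of fun x a =>
        if Subtype.restrict (· ≠ k) x.1 = Subtype.restrict (· ≠ k) a then θ j a x.2 else 0 := by
  classical
  obtain ⟨φ, hφ⟩ := exists_left_inverse_of_single_parent hdep hA1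
  set ψ : (Fin K → Fin H) × Fin V → Fin J → Fin V → ℝ := fun x i =>
    if i = j then Pi.single x.2 1 else φ i x.1
  refine ⟨of fun x r => ∏ i : {i // i ∈ S}, ψ x i (r i), ?_⟩
  ext x a
  refine (of_prod_mul_condTable_apply θ S ψ x a).trans ?_
  have hrest : ∏ i ∈ S.erase j, ∑ v, ψ x i v * θ i a v =
      ∏ i ∈ S.erase j, ∑ v, φ i x.1 v * θ i a v :=
    Finset.prod_congr rfl fun i hi => by simp only [ψ, if_neg (Finset.ne_of_mem_erase hi)]
  rw [← Finset.mul_prod_erase _ _ hj, hrest, prod_left_inverse_eq hφ hpure, hcov]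
  simp [ψ, Pi.single_apply, funext_iff]

theorem lt_rank_unfoldT [NeZero H] {G : Fin J → Fin K → Bool} {ν : (Fin K → Fin H) → ℝ}
    {θ : Fin J → (Fin K → Fin H) → Fin V → ℝ} (hdep : DependsOnlyOnCo G θ) (hcpt : IsCPT θ)
    (hpos : ∀ a, 0 < ν a) (hA1 : Assumption1 G θ) (hA2 : Assumption2 G θ)
    {S₁ S₂ : Finset (Fin J)} (hdisj : Disjoint S₁ S₂) {j : Fin J} {k : Fin K} (hj : j ∈ S₁)
    (hk : k ∈ co G j) (hpure₁ : ∀ i ∈ S₁.erase j, (co G i).card = 1)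
    (hcov₁ : coS G (S₁.erase j) = {k}ᶜ) (hpure₂ : ∀ i ∈ S₂, (co G i).card = 1)
    (hcov₂ : coS G S₂ = Finset.univ) :
    H ^ (K - 1) < (unfoldT ν θ S₁ S₂).rank := by
  obtain ⟨L₁, hL₁⟩ := exists_mul_condTable_eq_restrict hdep hA1 hj hpure₁ hcov₁
  obtain ⟨L₂, hL₂⟩ := exists_mul_condTable_eq_one hdep hA1 hpure₂ hcov₂
  obtain ⟨a₀, h, h', hne⟩ := hA2 j k hk
  have hπ : Subtype.restrict (· ≠ k) (Function.update a₀ k h) =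
      Subtype.restrict (· ≠ k) (Function.update a₀ k h') := by
    funext m
    simp [Function.update_of_ne m.2]
  have hw : ∀ a, θ j a ≠ 0 := fun a h0 => by simpa [h0] using (hcpt j a).2
  have hdet : IsUnit (diagonal ν).det := by
    rw [det_diagonal]
    exact isUnit_iff_ne_zero.mpr (Finset.prod_ne_zero_iff.mpr fun a _ => (hpos a).ne')
  calc H ^ (K - 1) < Fintype.card ({m : Fin K // m ≠ k} → Fin H) + 1 := by
        rw [card_fun_subtype_ne]; omega
    _ ≤ (L₁ * condTable θ S₁).rank :=
        hL₁ ▸ card_add_one_le_rank _ (Subtype.surjective_restrict _) (θ j) hw hπ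
          (linearIndependent_pair_of_sum_eq_one (hcpt j _).2 (hcpt j _).2 hne)
    _ = (L₁ * condTable θ S₁ * diagonal ν).rank := (rank_mul_eq_left_of_isUnit_det _ _ hdet).symm
    _ = (L₁ * unfoldT ν θ S₁ S₂ * L₂ᵀ).rank := by
        rw [unfoldT_eq_condTable_mul hcpt ν hdisj]
        simp only [Matrix.mul_assoc, ← transpose_mul, hL₂, transpose_one, Matrix.mul_one]
    _ ≤ (unfoldT ν θ S₁ S₂).rank := (rank_mul_le_left _ _).trans (rank_mul_le_right _ _)

theorem coS_first_block_erase {G : Fin J → Fin K → Bool} (hKJ : K ≤ J)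
    (hlow : ∀ i : Fin J, ∀ h : i.1 < K, co G i = {⟨i.1, h⟩}) (k : Fin K) :
    coS G (Finset.univ.filter fun i : Fin J => i.1 < K ∧ i.1 ≠ k.1) = {k}ᶜ := by
  ext m
  simp only [coS, Finset.mem_biUnion, Finset.mem_filter, Finset.mem_univ, true_and,
    Finset.mem_compl, Finset.mem_singleton]
  constructor
  · rintro ⟨i, ⟨hiK, hik⟩, hm⟩
    rw [hlow i hiK, Finset.mem_singleton] at hm
    exact fun h => hik (by rw [← h, hm])
  · intro hmk
    refine ⟨⟨m.1, by omega⟩, ⟨m.2, fun h => hmk (Fin.ext h)⟩, ?_⟩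
    rw [hlow _ m.2]
    exact Finset.mem_singleton_self _

theorem coS_second_block {G : Fin J → Fin K → Bool} (hJ : 2 * K ≤ J)
    (hhigh : ∀ i : Fin J, ∀ h : K ≤ i.1 ∧ i.1 < 2 * K, co G i = {⟨i.1 - K, by omega⟩}) :
    coS G (Finset.univ.filter fun i : Fin J => K ≤ i.1 ∧ i.1 < 2 * K) = Finset.univ := by
  refine Finset.eq_univ_of_forall fun m => Finset.mem_biUnion.mpr ?_
  have hm : K ≤ K + m.1 ∧ K + m.1 < 2 * K := by omega
  refine ⟨⟨K + m.1, by omega⟩, by simpa using hm, ?_⟩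
  rw [hhigh _ hm]
  simp

end

/-- Proposition 2: the unfolding `[T]_{([K]∖{k}) ∪ {j}, {K+1,…,2K}}`
has rank exceeding `H^{K-1}` iff `k ∈ co(j)`, for multi-parent `j`. -/
theorem prop2
    {J K V H : ℕ} [NeZero H] (hJ : 2 * K ≤ J)
    (G : Fin J → Fin K → Bool)
    (ν : (Fin K → Fin H) → ℝ) (θ : Fin J → (Fin K → Fin H) → Fin V → ℝ)
    (hdep : DependsOnlyOnCo G θ) (hcpt : IsCPT θ)
    (hpos : ∀ a, 0 < ν a)
    (hA1 : Assumption1 G θ) (hA2 : Assumption2 G θ)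
    (hfirst : ∀ k : Fin K, co G ⟨k.1, by have := k.isLt; omega⟩ = {k})
    (hsecond : ∀ k : Fin K, co G ⟨K + k.1, by have := k.isLt; omega⟩ = {k}) :
    ∀ (k : Fin K) (j : Fin J), 2 * K ≤ j.1 → 2 ≤ (co G j).card →
      (H ^ (K - 1) <
          (unfoldT ν θ
            ((Finset.univ.filter (fun i : Fin J => i.1 < K ∧ i.1 ≠ k.1)) ∪ {j})
            (Finset.univ.filter (fun i : Fin J => K ≤ i.1 ∧ i.1 < 2 * K))).rank
        ↔ k ∈ co G j) := by
  intro k j hj _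
  have hlow : ∀ i : Fin J, ∀ h : i.1 < K, co G i = {⟨i.1, h⟩} := fun i h => hfirst ⟨i.1, h⟩
  have hhigh : ∀ i : Fin J, ∀ h : K ≤ i.1 ∧ i.1 < 2 * K, co G i = {⟨i.1 - K, by omega⟩} :=
    fun i h => by simpa [Nat.add_sub_cancel' h.1] using hsecond ⟨i.1 - K, by omega⟩
  set Q := Finset.univ.filter fun i : Fin J => i.1 < K ∧ i.1 ≠ k.1
  set S₂ := Finset.univ.filter fun i : Fin J => K ≤ i.1 ∧ i.1 < 2 * K
  have hjQ : j ∉ Q := by simp [Q]; omega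
  have hdisj : Disjoint (Q ∪ {j}) S₂ := by
    rw [Finset.disjoint_left]; intro i hi; simp [Q, S₂] at hi ⊢; omega
  have hcovQ : coS G Q = {k}ᶜ := coS_first_block_erase (by omega) hlow k
  have hcoS₁ : coS G (Q ∪ {j}) = {k}ᶜ ∪ co G j := by
    rw [coS, Finset.union_biUnion, Finset.singleton_biUnion, ← coS, hcovQ]
  have herase : (Q ∪ {j}).erase j = Q := by
    rw [Finset.union_comm, ← Finset.insert_eq, Finset.erase_insert hjQ]
  constructor
  · intro hlt
    by_contra hk
    exact (rank_unfoldT_le hdep hcpt ν hdisj (k := k) (by rw [hcoS₁]; simpa using hk)).not_gt hlt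
  · intro hk
    refine lt_rank_unfoldT hdep hcpt hpos hA1 hA2 hdisj (by simp) hk (fun i hi => ?_)
      (by rw [herase, hcovQ]) (fun i hi => ?_) (coS_second_block hJ hhigh)
    · rw [herase] at hi; rw [hlow i (Finset.mem_filter.mp hi).2.1, Finset.card_singleton]
    · rw [hhigh i (Finset.mem_filter.mp hi).2, Finset.card_singleton]

end LBGM
end

section
/- In the discrete latent bipartite graphical model with J ≥ 2K, suppose co(m) = {m} for every m ∈ {1,…,K} (the first K rows of G form the identity I_K). Then for every k ∈ [K] and every j ∈ {2K+1,…,J} with k ∉ co(j), one has rank([T]_{([K]∖{k}) ∪ {j}, {K+1,…,2K}}) ≤ H^{K−1}; no assumptions on ν or on the conditional probability tables are needed. -/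
open Matrix MeasureTheory

namespace LBGM

/-- Extend `b` defined off `k` by `0` at `k`. -/
def extB {K H : ℕ} [NeZero H] (k : Fin K) (b : {k' : Fin K // k' ≠ k} → Fin H) :
    Fin K → Fin H :=
  fun k' => if h : k' ≠ k then b ⟨k', h⟩ else 0

/-- Restrict `a` off `k`. -/
def resB {K H : ℕ} (k : Fin K) (a : Fin K → Fin H) : {k' : Fin K // k' ≠ k} → Fin H :=
  fun k' => a k'.1

noncomputable def rowMat {J K V H : ℕ} [NeZero H]
    (θ : Fin J → (Fin K → Fin H) → Fin V → ℝ) (S₁ : Finset (Fin J)) (k : Fin K) :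
    Matrix ({j // j ∈ S₁} → Fin V) ({k' : Fin K // k' ≠ k} → Fin H) ℝ :=
  Matrix.of fun r b => ∏ i : {j // j ∈ S₁}, θ i.1 (extB k b) (r i)

noncomputable def freeSum {J K V H : ℕ}
    (θ : Fin J → (Fin K → Fin H) → Fin V → ℝ) (S₁ S₂ : Finset (Fin J))
    (a : Fin K → Fin H) (c : {j // j ∈ S₂} → Fin V) : ℝ :=
  ∑ w : {j : Fin J // ¬ j ∈ S₁} → Fin V,
    if ∀ (i : {j // j ∈ S₂}) (h : ¬ i.1 ∈ S₁), w ⟨i.1, h⟩ = c i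
    then ∏ i : {j : Fin J // ¬ j ∈ S₁}, θ i.1 a (w i) else 0

noncomputable def colMat {J K V H : ℕ} (ν : (Fin K → Fin H) → ℝ)
    (θ : Fin J → (Fin K → Fin H) → Fin V → ℝ) (S₁ S₂ : Finset (Fin J)) (k : Fin K) :
    Matrix ({k' : Fin K // k' ≠ k} → Fin H) ({j // j ∈ S₂} → Fin V) ℝ :=
  Matrix.of fun b c => ∑ a : Fin K → Fin H,
    if resB k a = b then ν a * freeSum θ S₁ S₂ a c else 0

lemma key {J K V H : ℕ}
    (θ : Fin J → (Fin K → Fin H) → Fin V → ℝ) (S₁ S₂ : Finset (Fin J))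
    (hdisj : ∀ i ∈ S₂, i ∉ S₁) (a : Fin K → Fin H)
    (r : {j // j ∈ S₁} → Fin V) (c : {j // j ∈ S₂} → Fin V) :
    (∑ y : Fin J → Fin V,
      if (∀ i : {j // j ∈ S₁}, y i.1 = r i) ∧ (∀ i : {j // j ∈ S₂}, y i.1 = c i)
      then ∏ j', θ j' a (y j') else 0)
    = (∏ i : {j // j ∈ S₁}, θ i.1 a (r i)) * freeSum θ S₁ S₂ a c := by
  classical
  set e := (Equiv.piEquivPiSubtypeProd (fun j : Fin J => j ∈ S₁) (fun _ => Fin V)).symm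
    with he
  rw [← Equiv.sum_comp e, Fintype.sum_prod_type]
  have hev1 : ∀ (u : {j // j ∈ S₁} → Fin V) (w : {j : Fin J // ¬ j ∈ S₁} → Fin V)
      (i : {j // j ∈ S₁}), e (u, w) i.1 = u i := by
    intro u w i
    rw [he]
    simp [Equiv.piEquivPiSubtypeProd_symm_apply, i.2]
  have hev2 : ∀ (u : {j // j ∈ S₁} → Fin V) (w : {j : Fin J // ¬ j ∈ S₁} → Fin V)
      (i : Fin J) (h : ¬ i ∈ S₁), e (u, w) i = w ⟨i, h⟩ := by
    intro u w i h
    rw [he]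
    simp [Equiv.piEquivPiSubtypeProd_symm_apply, h]
  calc (∑ u : {j // j ∈ S₁} → Fin V, ∑ w : {j : Fin J // ¬ j ∈ S₁} → Fin V,
        if (∀ i : {j // j ∈ S₁}, e (u, w) i.1 = r i) ∧
            (∀ i : {j // j ∈ S₂}, e (u, w) i.1 = c i)
        then ∏ j', θ j' a (e (u, w) j') else 0)
      = ∑ u : {j // j ∈ S₁} → Fin V, ∑ w : {j : Fin J // ¬ j ∈ S₁} → Fin V,
        if u = r then
          (if ∀ (i : {j // j ∈ S₂}) (h : ¬ i.1 ∈ S₁), w ⟨i.1, h⟩ = c i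
           then (∏ i : {j // j ∈ S₁}, θ i.1 a (r i)) *
                ∏ i : {j : Fin J // ¬ j ∈ S₁}, θ i.1 a (w i) else 0)
        else 0 := by
        refine Finset.sum_congr rfl fun u _ => Finset.sum_congr rfl fun w _ => ?_
        by_cases hu : u = r
        · by_cases hw : ∀ (i : {j // j ∈ S₂}) (h : ¬ i.1 ∈ S₁), w ⟨i.1, h⟩ = c i
          · rw [if_pos hu, if_pos hw, if_pos]
            · rw [← Fintype.prod_subtype_mul_prod_subtype (fun j => j ∈ S₁)
                (fun j' => θ j' a (e (u, w) j'))]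
              congr 1
              · refine Finset.prod_congr (by congr!) fun i _ => ?_
                rw [hev1 u w i, congrFun hu i]
              · refine Finset.prod_congr (by congr!) fun i _ => ?_
                rw [hev2 u w i.1 i.2]
            · constructor
              · intro i; rw [hev1 u w i, congrFun hu i]
              · intro i
                rw [hev2 u w i.1 (hdisj i.1 i.2)]
                exact hw i (hdisj i.1 i.2)
          · rw [if_pos hu, if_neg hw, if_neg]
            rintro ⟨-, h2⟩
            exact hw fun i h => by rw [← hev2 u w i.1 h]; exact h2 i
        · rw [if_neg hu, if_neg]
          rintro ⟨h1, -⟩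
          exact hu (funext fun i => by rw [← hev1 u w i]; exact h1 i)
    _ = ∑ w : {j : Fin J // ¬ j ∈ S₁} → Fin V,
          if ∀ (i : {j // j ∈ S₂}) (h : ¬ i.1 ∈ S₁), w ⟨i.1, h⟩ = c i
          then (∏ i : {j // j ∈ S₁}, θ i.1 a (r i)) *
               ∏ i : {j : Fin J // ¬ j ∈ S₁}, θ i.1 a (w i) else 0 := by
        rw [Finset.sum_comm]
        refine Finset.sum_congr rfl fun w _ => ?_
        rw [Finset.sum_ite_eq' Finset.univ r]
        simp
    _ = (∏ i : {j // j ∈ S₁}, θ i.1 a (r i)) * freeSum θ S₁ S₂ a c := by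
        unfold freeSum
        rw [Finset.mul_sum]
        exact Finset.sum_congr rfl fun w _ => by rw [mul_ite, mul_zero]

/-- "only if" direction of Proposition 2: if `k ∉ co(j)` then the
unfolding `[T]_{([K]∖{k}) ∪ {j}, {K+1,…,2K}}` has rank at most `H^{K-1}`;
no assumptions on `ν` or on the conditional probability tables are needed. -/
theorem prop2_onlyIf
    {J K V H : ℕ} [NeZero H] (hH : 2 ≤ H) (hVH : H ≤ V) (hJ : 2 * K ≤ J)
    (G : Fin J → Fin K → Bool)
    (ν : (Fin K → Fin H) → ℝ) (θ : Fin J → (Fin K → Fin H) → Fin V → ℝ)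
    (hdep : DependsOnlyOnCo G θ)
    (hfirst : ∀ m : Fin K, co G ⟨m.1, by have := m.isLt; omega⟩ = {m}) :
    ∀ (k : Fin K) (j : Fin J), 2 * K ≤ j.1 → k ∉ co G j →
      (unfoldT ν θ
          ((Finset.univ.filter (fun i : Fin J => i.1 < K ∧ i.1 ≠ k.1)) ∪ {j})
          (Finset.univ.filter (fun i : Fin J => K ≤ i.1 ∧ i.1 < 2 * K))).rank
        ≤ H ^ (K - 1) := by

  intro k j hj2K hkj
  classical
  set S₁ : Finset (Fin J) :=
    (Finset.univ.filter (fun i : Fin J => i.1 < K ∧ i.1 ≠ k.1)) ∪ {j} with hS₁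
  set S₂ : Finset (Fin J) :=
    Finset.univ.filter (fun i : Fin J => K ≤ i.1 ∧ i.1 < 2 * K) with hS₂
  have hdisj : ∀ i ∈ S₂, i ∉ S₁ := by
    intro i hi hmem
    rw [hS₂, Finset.mem_filter] at hi
    rw [hS₁, Finset.mem_union, Finset.mem_filter, Finset.mem_singleton] at hmem
    rcases hmem with ⟨-, h1, -⟩ | h
    · omega
    · have := hi.2.2; rw [h] at this; omega
  have hkS₁ : ∀ i : Fin J, i ∈ S₁ → ∀ k' ∈ co G i, k' ≠ k := by
    intro i hi k' hk'
    rw [hS₁, Finset.mem_union, Finset.mem_filter, Finset.mem_singleton] at hi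
    rcases hi with ⟨-, hlt, hne⟩ | h
    · have h5 : co G i = {(⟨i.1, hlt⟩ : Fin K)} := hfirst ⟨i.1, hlt⟩
      rw [h5, Finset.mem_singleton] at hk'
      subst hk'
      intro hc
      exact hne (congrArg Fin.val hc)
    · subst h
      exact fun hc => hkj (hc ▸ hk')
  have hmain : unfoldT ν θ S₁ S₂ = rowMat θ S₁ k * colMat ν θ S₁ S₂ k := by
    ext r c
    rw [Matrix.mul_apply]
    show (∑ y : Fin J → Fin V,
        if (∀ i : {j' // j' ∈ S₁}, y i.1 = r i) ∧ (∀ i : {j' // j' ∈ S₂}, y i.1 = c i)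
        then jointP ν θ y else 0) = _
    calc (∑ y : Fin J → Fin V,
          if (∀ i : {j' // j' ∈ S₁}, y i.1 = r i) ∧ (∀ i : {j' // j' ∈ S₂}, y i.1 = c i)
          then jointP ν θ y else 0)
        = ∑ y : Fin J → Fin V, ∑ a : Fin K → Fin H,
          if (∀ i : {j' // j' ∈ S₁}, y i.1 = r i) ∧ (∀ i : {j' // j' ∈ S₂}, y i.1 = c i)
          then ν a * ∏ j', θ j' a (y j') else 0 := by
          refine Finset.sum_congr rfl fun y _ => ?_
          unfold jointP
          split <;> simp
      _ = ∑ a : Fin K → Fin H, ∑ y : Fin J → Fin V,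
          if (∀ i : {j' // j' ∈ S₁}, y i.1 = r i) ∧ (∀ i : {j' // j' ∈ S₂}, y i.1 = c i)
          then ν a * ∏ j', θ j' a (y j') else 0 := Finset.sum_comm
      _ = ∑ a : Fin K → Fin H,
          ν a * ((∏ i : {j' // j' ∈ S₁}, θ i.1 a (r i)) * freeSum θ S₁ S₂ a c) := by
          refine Finset.sum_congr rfl fun a _ => ?_
          rw [← key θ S₁ S₂ hdisj a r c, Finset.mul_sum]
          exact Finset.sum_congr rfl fun y _ => by rw [mul_ite, mul_zero]
      _ = ∑ a : Fin K → Fin H,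
          rowMat θ S₁ k r (resB k a) * (ν a * freeSum θ S₁ S₂ a c) := by
          refine Finset.sum_congr rfl fun a _ => ?_
          have hrw : (∏ i : {j' // j' ∈ S₁}, θ i.1 a (r i)) = rowMat θ S₁ k r (resB k a) := by
            refine Finset.prod_congr rfl fun i _ => ?_
            have hag : ∀ k' ∈ co G i.1, a k' = extB k (resB k a) k' := by
              intro k' hk'
              have hne := hkS₁ i.1 i.2 k' hk'
              simp [extB, resB, hne]
            rw [hdep i.1 a (extB k (resB k a)) hag]
          rw [hrw]; ring
      _ = ∑ b : {k' : Fin K // k' ≠ k} → Fin H,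
          rowMat θ S₁ k r b * colMat ν θ S₁ S₂ k b c := by
          have hcol : ∀ b, rowMat θ S₁ k r b * colMat ν θ S₁ S₂ k b c
              = ∑ a : Fin K → Fin H, if resB k a = b then
                  rowMat θ S₁ k r b * (ν a * freeSum θ S₁ S₂ a c) else 0 := by
            intro b
            show rowMat θ S₁ k r b * (∑ a : Fin K → Fin H,
              if resB k a = b then ν a * freeSum θ S₁ S₂ a c else 0) = _
            rw [Finset.mul_sum]
            exact Finset.sum_congr rfl fun a _ => by rw [mul_ite, mul_zero]
          simp_rw [hcol]
          rw [Finset.sum_comm]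
          refine Finset.sum_congr rfl fun a _ => ?_
          rw [Finset.sum_ite_eq Finset.univ (resB k a)]
          simp
  rw [hmain]
  calc (rowMat θ S₁ k * colMat ν θ S₁ S₂ k).rank
      ≤ (rowMat θ S₁ k).rank := Matrix.rank_mul_le_left _ _
    _ ≤ Fintype.card ({k' : Fin K // k' ≠ k} → Fin H) := Matrix.rank_le_card_width _
    _ = H ^ (K - 1) := by
        rw [Fintype.card_fun, Fintype.card_fin]
        congr 1
        simp [Fintype.card_subtype_compl]


end LBGM
end

section
/- In the discrete latent bipartite graphical model, suppose J ≥ 3K and the first 3K rows of G consist of three copies of the identity matrix: co(j) = {j}, co(K+j) = {j} and co(2K+j) = {j} for every j ∈ [K], with the remaining rows of G arbitrary. Let (ν, θ) and (ν̄, θ̄) be two parameter pairs for this same graph G such that ν and ν̄ are strictly positive and, for every j ∈ {1,…,3K}, both V × H matrices P(Y_j | A_{co(j)}) (formed from θ_j and from θ̄_j respectively) have full column rank H. If the two parameter pairs induce the same joint distribution of Y, then they agree up to a relabeling of the latent variables and of their categories: there exist a permutation σ of [K] with g_{j,k} = g_{j,σ(k)} for all j, k, and permutations π_1,…,π_K of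 {0,…,H−1}, such that, with Φ : {0,…,H−1}^K → {0,…,H−1}^K defined by Φ(a)_k = π_k(a_{σ(k)}), one has ν̄(a) = ν(Φ(a)) for all a and θ̄_j(v | a|_{co(j)}) = θ_j(v | Φ(a)|_{co(j)}) for all j ∈ [J], v ∈ {0,…,V−1} and a ∈ {0,…,H−1}^K. -/
open Matrix MeasureTheory

namespace LBGM

/-! ### Auxiliary lemmas for the proof -/

lemma exists_left_inv {m n : Type*} [Fintype m] [Fintype n] [DecidableEq m] [DecidableEq n]
    (M : Matrix m n ℝ) (h : M.rank = Fintype.card n) : ∃ W : Matrix n m ℝ, W * M = 1 := by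
  have hker : LinearMap.ker M.mulVecLin = ⊥ := by
    have h1 := LinearMap.finrank_range_add_finrank_ker M.mulVecLin
    rw [Matrix.rank] at h
    have hd : Module.finrank ℝ (n → ℝ) = Fintype.card n := Module.finrank_fintype_fun_eq_card ℝ
    have : Module.finrank ℝ (LinearMap.ker M.mulVecLin) = 0 := by omega
    exact Submodule.finrank_eq_zero.mp this
  obtain ⟨g, hg⟩ := M.mulVecLin.exists_leftInverse_of_injective hker
  refine ⟨LinearMap.toMatrix' g, ?_⟩
  apply Matrix.toLin'.injective
  rw [Matrix.toLin'_mul, Matrix.toLin'_toMatrix', Matrix.toLin'_one]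
  have : Matrix.toLin' M = M.mulVecLin := by
    ext v; simp [Matrix.toLin'_apply, Matrix.mulVecLin_apply]
  rw [this]; exact hg

instance uniqSing {α : Type*} [DecidableEq α] (x : α) : Unique {y // y ∈ ({x} : Finset α)} :=
  ⟨⟨⟨x, Finset.mem_singleton_self x⟩⟩, by rintro ⟨y, hy⟩; ext; simpa using hy⟩

lemma pure_child_W {J K V H : ℕ} [NeZero H] {G : Fin J → Fin K → Bool}
    {θ : Fin J → (Fin K → Fin H) → Fin V → ℝ} (hdep : DependsOnlyOnCo G θ)
    (j : Fin J) (k : Fin K) (hco : co G j = {k})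
    (hr : (cpt θ {j} (co G j)).rank = H) :
    ∃ W : Fin H → Fin V → ℝ, ∀ (h : Fin H) (c : Fin K → Fin H),
      ∑ v, W h v * θ j c v = if c k = h then 1 else 0 := by
  rw [hco] at hr
  have hcard : Fintype.card ({x // x ∈ ({k} : Finset (Fin K))} → Fin H) = H := by
    simp [Fintype.card_fun]
  obtain ⟨W₀, hW₀⟩ := exists_left_inv (cpt θ {j} ({k} : Finset (Fin K))) (by rw [hr, hcard])
  refine ⟨fun h v => W₀ (fun _ => h) (fun _ => v), fun h c => ?_⟩
  have e1 := congrFun (congrFun hW₀ (fun _ => h)) (fun _ => c k)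
  rw [Matrix.mul_apply, Matrix.one_apply] at e1
  have hsum : ∑ y : {x // x ∈ ({j} : Finset (Fin J))} → Fin V,
      W₀ (fun _ => h) y * cpt θ {j} ({k} : Finset (Fin K)) y (fun _ => c k)
      = ∑ v, W₀ (fun _ => h) (fun _ => v) * θ j c v := by
    rw [← Equiv.sum_comp (Equiv.funUnique {x // x ∈ ({j} : Finset (Fin J))} (Fin V)).symm]
    refine Finset.sum_congr rfl fun v _ => ?_
    have hv : ((Equiv.funUnique {x // x ∈ ({j} : Finset (Fin J))} (Fin V)).symm v)
        = fun _ => v := rfl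
    rw [hv]
    congr 1
    show cpt θ {j} ({k} : Finset (Fin K)) (fun _ => v) (fun _ => c k) = θ j c v
    have hprod : cpt θ {j} ({k} : Finset (Fin K)) (fun _ => v) (fun _ => c k)
        = θ j (extendA {k} (fun _ => c k)) v := by
      show (∏ j' : {x // x ∈ ({j} : Finset (Fin J))},
        θ j'.1 (extendA {k} (fun _ => c k)) v) = _
      rw [Fintype.prod_unique (fun j' : {x // x ∈ ({j} : Finset (Fin J))} =>
        θ j'.1 (extendA {k} (fun _ => c k)) v)]
      rfl
    rw [hprod]
    refine congrFun (hdep j _ c fun k' hk' => ?_) v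
    rw [hco] at hk'
    rcases Finset.mem_singleton.mp hk' with rfl
    simp [extendA]
  rw [hsum] at e1
  rw [e1]
  by_cases hck : c k = h
  · rw [if_pos (funext fun _ => hck.symm), if_pos hck]
  · rw [if_neg, if_neg hck]
    intro hfe
    exact hck (congrFun hfe ⟨k, Finset.mem_singleton_self k⟩).symm

lemma eval0 {J K V H : ℕ} (ν : (Fin K → Fin H) → ℝ)
    (θ : Fin J → (Fin K → Fin H) → Fin V → ℝ) (w : Fin J → Fin V → ℝ) :
    ∑ y : Fin J → Fin V, (∏ j, w j (y j)) * jointP ν θ y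
    = ∑ c : Fin K → Fin H, ν c * ∏ j, (∑ v, w j v * θ j c v) := by
  unfold jointP
  simp_rw [Finset.mul_sum]
  rw [Finset.sum_comm]
  refine Finset.sum_congr rfl fun c _ => ?_
  rw [Fintype.prod_sum (fun j v => w j v * θ j c v), Finset.mul_sum]
  refine Finset.sum_congr rfl fun y _ => ?_
  rw [Finset.prod_mul_distrib]
  ring

lemma prod_range_shift {J : ℕ} (K : ℕ) (f : Fin J → ℝ) (m : ℕ) (hm : m * K + K ≤ J) :
    ∏ j ∈ Finset.univ.filter (fun j : Fin J => m * K ≤ j.1 ∧ j.1 < m * K + K), f j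
    = ∏ k : Fin K, f ⟨m * K + k.1, by have := k.isLt; omega⟩ := by
  refine (Finset.prod_bij'
    (fun (k : Fin K) (_ : k ∈ Finset.univ) => (⟨m * K + k.1, by have := k.isLt; omega⟩ : Fin J))
    (fun j hj => (⟨j.1 - m * K, by simp only [Finset.mem_filter] at hj; omega⟩ : Fin K))
    ?_ ?_ ?_ ?_ ?_).symm
  · intro k _; simp only [Finset.mem_filter, Finset.mem_univ, true_and]
    have := k.isLt; omega
  · intro j hj; exact Finset.mem_univ _
  · intro k _; ext; simp
  · intro j hj; simp only [Finset.mem_filter] at hj; ext; simp; omega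
  · intro k _; rfl

lemma prod_split {J K : ℕ} (hJ : 3 * K ≤ J) (f : Fin J → ℝ) :
    ∏ j, f j = (∏ k : Fin K, f ⟨k.1, by have := k.isLt; omega⟩)
      * (∏ k : Fin K, f ⟨K + k.1, by have := k.isLt; omega⟩)
      * (∏ k : Fin K, f ⟨2 * K + k.1, by have := k.isLt; omega⟩)
      * ∏ j ∈ Finset.univ.filter (fun j : Fin J => 3 * K ≤ j.1), f j := by
  have h0 := prod_range_shift (J := J) K f 0 (by omega)
  have h1 := prod_range_shift (J := J) K f 1 (by omega)
  have h2 := prod_range_shift (J := J) K f 2 (by omega)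
  simp only [Nat.zero_mul, Nat.one_mul, Nat.zero_add] at h0 h1 h2
  rw [← h0, ← h1, ← h2]
  have hsplit : ∀ (p : Fin J → Prop) [DecidablePred p] (s : Finset (Fin J)),
      ∏ j ∈ s, f j = (∏ j ∈ s.filter p, f j) * ∏ j ∈ s.filter (fun j => ¬ p j), f j :=
    fun p _ s => (Finset.prod_filter_mul_prod_filter_not s p f).symm
  rw [hsplit (fun j => j.1 < K) Finset.univ]
  rw [hsplit (fun j => j.1 < 2 * K) (Finset.univ.filter (fun j => ¬ j.1 < K))]
  rw [hsplit (fun j => j.1 < 3 * K)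
    ((Finset.univ.filter (fun j => ¬ j.1 < K)).filter (fun j => ¬ j.1 < 2 * K))]
  simp only [Finset.filter_filter]
  have e1 : Finset.univ.filter (fun j : Fin J => j.1 < K)
      = Finset.univ.filter (fun j : Fin J => 0 * K ≤ j.1 ∧ j.1 < 0 * K + K) := by
    apply Finset.filter_congr; intro j _; omega
  have e2 : Finset.univ.filter (fun j : Fin J => ¬ j.1 < K ∧ j.1 < 2 * K)
      = Finset.univ.filter (fun j : Fin J => 1 * K ≤ j.1 ∧ j.1 < 1 * K + K) := by
    apply Finset.filter_congr; intro j _; omega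
  have e3 : Finset.univ.filter (fun j : Fin J => (¬ j.1 < K ∧ ¬ j.1 < 2 * K) ∧ j.1 < 3 * K)
      = Finset.univ.filter (fun j : Fin J => 2 * K ≤ j.1 ∧ j.1 < 2 * K + K) := by
    apply Finset.filter_congr; intro j _; omega
  have e4 : Finset.univ.filter (fun j : Fin J => (¬ j.1 < K ∧ ¬ j.1 < 2 * K) ∧ ¬ j.1 < 3 * K)
      = Finset.univ.filter (fun j : Fin J => 3 * K ≤ j.1) := by
    apply Finset.filter_congr; intro j _; omega
  rw [e1, e2, e3, e4]
  ring

def mkw {J K V : ℕ} (w1 w2 w3 : Fin K → Fin V → ℝ) (wr : Fin J → Fin V → ℝ) :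
    Fin J → Fin V → ℝ :=
  fun j => if h : j.1 < K then w1 ⟨j.1, h⟩
    else if h2 : j.1 < 2 * K then w2 ⟨j.1 - K, by omega⟩
    else if h3 : j.1 < 3 * K then w3 ⟨j.1 - 2 * K, by omega⟩
    else wr j

lemma mkw_e1 {J K V : ℕ} (w1 w2 w3 : Fin K → Fin V → ℝ) (wr : Fin J → Fin V → ℝ)
    (k : Fin K) (hk : k.1 < J) : mkw w1 w2 w3 wr ⟨k.1, hk⟩ = w1 k := by
  unfold mkw
  rw [dif_pos (show ((⟨k.1, hk⟩ : Fin J) : ℕ) < K from k.isLt)]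

lemma mkw_e2 {J K V : ℕ} (w1 w2 w3 : Fin K → Fin V → ℝ) (wr : Fin J → Fin V → ℝ)
    (k : Fin K) (hk : K + k.1 < J) : mkw w1 w2 w3 wr ⟨K + k.1, hk⟩ = w2 k := by
  unfold mkw
  rw [dif_neg (by simp only [Fin.val_mk]; omega),
    dif_pos (by simp only [Fin.val_mk]; have := k.isLt; omega)]
  congr 1
  ext
  simp

lemma mkw_e3 {J K V : ℕ} (w1 w2 w3 : Fin K → Fin V → ℝ) (wr : Fin J → Fin V → ℝ)
    (k : Fin K) (hk : 2 * K + k.1 < J) : mkw w1 w2 w3 wr ⟨2 * K + k.1, hk⟩ = w3 k := by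
  unfold mkw
  rw [dif_neg (by simp only [Fin.val_mk]; omega), dif_neg (by simp only [Fin.val_mk]; omega),
    dif_pos (by simp only [Fin.val_mk]; have := k.isLt; omega)]
  congr 1
  ext
  simp

lemma mkw_rest {J K V : ℕ} (w1 w2 w3 : Fin K → Fin V → ℝ) (wr : Fin J → Fin V → ℝ)
    (j : Fin J) (hj : 3 * K ≤ j.1) : mkw w1 w2 w3 wr j = wr j := by
  unfold mkw
  rw [dif_neg (by omega), dif_neg (by omega), dif_neg (by omega)]

lemma prod_delta {K H : ℕ} (c a : Fin K → Fin H) :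
    (∏ k, if c k = a k then (1:ℝ) else 0) = if c = a then 1 else 0 := by
  by_cases h : c = a
  · subst h; simp
  · rw [if_neg h]
    obtain ⟨k, hk⟩ := Function.ne_iff.mp h
    exact Finset.prod_eq_zero (Finset.mem_univ k) (if_neg hk)

lemma ite_eq_comm {α : Type*} [DecidableEq α] (x y : α) (r : ℝ) :
    (if x = y then r else 0) = if y = x then r else 0 := by
  by_cases h : x = y
  · subst h; rfl
  · rw [if_neg h, if_neg fun hh => h hh.symm]

lemma instance_eval {J K V H : ℕ} (hJ : 3 * K ≤ J)
    (ν : (Fin K → Fin H) → ℝ) (θ : Fin J → (Fin K → Fin H) → Fin V → ℝ)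
    (w1 w2 w3 : Fin K → Fin V → ℝ) (wr : Fin J → Fin V → ℝ)
    (f1 f2 f3 : Fin K → (Fin K → Fin H) → ℝ) (fr : (Fin K → Fin H) → ℝ)
    (h1 : ∀ (k : Fin K) c, (∑ v, w1 k v * θ ⟨k.1, by have := k.isLt; omega⟩ c v) = f1 k c)
    (h2 : ∀ (k : Fin K) c, (∑ v, w2 k v * θ ⟨K + k.1, by have := k.isLt; omega⟩ c v) = f2 k c)
    (h3 : ∀ (k : Fin K) c, (∑ v, w3 k v * θ ⟨2 * K + k.1, by have := k.isLt; omega⟩ c v) = f3 k c)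
    (hr : ∀ c, (∏ j ∈ Finset.univ.filter (fun j : Fin J => 3 * K ≤ j.1),
      ∑ v, wr j v * θ j c v) = fr c) :
    ∑ y : Fin J → Fin V, (∏ j, mkw w1 w2 w3 wr j (y j)) * jointP ν θ y
    = ∑ c, ν c * ((∏ k, f1 k c) * (∏ k, f2 k c) * (∏ k, f3 k c) * fr c) := by
  rw [eval0]
  refine Finset.sum_congr rfl fun c _ => ?_
  congr 1
  rw [prod_split hJ (fun j => ∑ v, mkw w1 w2 w3 wr j v * θ j c v)]
  congr 1
  · congr 1
    · congr 1
      · refine Finset.prod_congr rfl fun k _ => ?_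
        rw [show (∑ v, mkw w1 w2 w3 wr ⟨k.1, by have := k.isLt; omega⟩ v
            * θ ⟨k.1, by have := k.isLt; omega⟩ c v) = f1 k c from by
          rw [mkw_e1 w1 w2 w3 wr k]; exact h1 k c]
      · refine Finset.prod_congr rfl fun k _ => ?_
        rw [show (∑ v, mkw w1 w2 w3 wr ⟨K + k.1, by have := k.isLt; omega⟩ v
            * θ ⟨K + k.1, by have := k.isLt; omega⟩ c v) = f2 k c from by
          rw [mkw_e2 w1 w2 w3 wr k]; exact h2 k c]
    · refine Finset.prod_congr rfl fun k _ => ?_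
      rw [show (∑ v, mkw w1 w2 w3 wr ⟨2 * K + k.1, by have := k.isLt; omega⟩ v
          * θ ⟨2 * K + k.1, by have := k.isLt; omega⟩ c v) = f3 k c from by
        rw [mkw_e3 w1 w2 w3 wr k]; exact h3 k c]
  · rw [← hr c]
    refine Finset.prod_congr rfl fun j hj => ?_
    rw [mkw_rest w1 w2 w3 wr j (Finset.mem_filter.mp hj).2]

lemma perm_support {α : Type*} [Fintype α] [DecidableEq α] [Nonempty α]
    (ν ν' : α → ℝ) (hpos : ∀ a, 0 < ν a) (hpos' : ∀ a, 0 < ν' a)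
    (P1 P2 P3 : Matrix α α ℝ)
    (hT : ∀ a b d, ∑ c, ν' c * P1 a c * P2 b c * P3 d c = if b = a ∧ d = a then ν a else 0)
    (h12 : ∀ a b, ∑ c, ν' c * P1 a c * P2 b c = if b = a then ν a else 0)
    (h13 : ∀ a b, ∑ c, ν' c * P1 a c * P3 b c = if b = a then ν a else 0) :
    ∃ φ : α → α, Function.Bijective φ ∧
      (∀ c a, a ≠ φ c → P1 a c = 0) ∧ (∀ c a, a ≠ φ c → P2 a c = 0) ∧
      (∀ c a, a ≠ φ c → P3 a c = 0) := by
  classical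
  have hu : IsUnit (Matrix.diagonal ν).det := by
    rw [Matrix.det_diagonal]
    exact isUnit_iff_ne_zero.mpr (Finset.prod_ne_zero_iff.mpr fun a _ => (hpos a).ne')
  have key : ∀ (A B : Matrix α α ℝ),
      (∀ a b, ∑ c, ν' c * A a c * B b c = if b = a then ν a else 0) →
      ∃ L : Matrix α α ℝ, L * A = 1 := by
    intro A B hAB
    have hM : Matrix.diagonal ν = A * (Matrix.diagonal ν' * Bᵀ) := by
      ext a b
      rw [Matrix.mul_apply]
      have : ∀ c, A a c * (Matrix.diagonal ν' * Bᵀ) c b = ν' c * A a c * B b c := by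
        intro c
        rw [Matrix.diagonal_mul, Matrix.transpose_apply]
        ring
      rw [Finset.sum_congr rfl fun c _ => this c, hAB a b, Matrix.diagonal_apply]
      by_cases hab : a = b
      · subst hab; simp
      · rw [if_neg hab, if_neg (Ne.symm hab)]
    have hR : A * ((Matrix.diagonal ν' * Bᵀ) * (Matrix.diagonal ν)⁻¹) = 1 := by
      rw [← Matrix.mul_assoc, ← hM, Matrix.mul_nonsing_inv _ hu]
    exact ⟨_, mul_eq_one_comm.mp hR⟩
  obtain ⟨L1, hL1⟩ := key P1 P2 h12
  obtain ⟨L2, hL2⟩ := key P2 P1 (by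
    intro a b
    rw [show (∑ c, ν' c * P2 a c * P1 b c) = ∑ c, ν' c * P1 b c * P2 a c from
      Finset.sum_congr rfl fun c _ => by ring, h12 b a]
    by_cases hab : a = b
    · subst hab; simp
    · rw [if_neg hab, if_neg (Ne.symm hab)])
  obtain ⟨L3, hL3⟩ := key P3 P1 (by
    intro a b
    rw [show (∑ c, ν' c * P3 a c * P1 b c) = ∑ c, ν' c * P1 b c * P3 a c from
      Finset.sum_congr rfl fun c _ => by ring, h13 b a]
    by_cases hab : a = b
    · subst hab; simp
    · rw [if_neg hab, if_neg (Ne.symm hab)])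
  have colnz : ∀ (A L : Matrix α α ℝ), L * A = 1 → ∀ c, ∃ a, A a c ≠ 0 := by
    intro A L hL c
    by_contra hall
    push_neg at hall
    have := congrFun (congrFun hL c) c
    rw [Matrix.mul_apply, Matrix.one_apply_eq] at this
    rw [Finset.sum_eq_zero (fun a _ => by rw [hall a, mul_zero])] at this
    exact one_ne_zero this.symm
  have P3inj : ∀ x : α → ℝ, (∀ d, ∑ c, P3 d c * x c = 0) → ∀ c, x c = 0 := by
    intro x hx c
    have h1 : P3.mulVec x = 0 := by
      ext d; exact hx d
    have : x = 0 := by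
      have := congrArg (fun y => L3.mulVec y) h1
      simpa [Matrix.mulVec_mulVec, hL3] using this
    exact congrFun this c
  have hzero : ∀ a b, b ≠ a → ∀ c, P1 a c * P2 b c = 0 := by
    intro a b hba c
    have hx : ∀ d, ∑ c, P3 d c * (ν' c * P1 a c * P2 b c) = 0 := by
      intro d
      rw [show (∑ c, P3 d c * (ν' c * P1 a c * P2 b c))
        = ∑ c, ν' c * P1 a c * P2 b c * P3 d c from Finset.sum_congr rfl fun c _ => by ring]
      rw [hT a b d, if_neg (by tauto)]
    have := P3inj _ hx c
    rcases mul_eq_zero.mp this with h | h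
    · rcases mul_eq_zero.mp h with h' | h'
      · exact absurd h' (hpos' c).ne'
      · rw [h', zero_mul]
    · rw [h, mul_zero]
  have hex : ∀ c, ∃ a, P1 a c ≠ 0 := colnz P1 L1 hL1
  choose φ hφ using hex
  have hP2supp : ∀ c b, b ≠ φ c → P2 b c = 0 := by
    intro c b hb
    rcases mul_eq_zero.mp (hzero (φ c) b hb c) with h | h
    · exact absurd h (hφ c)
    · exact h
  have hP2nz : ∀ c, P2 (φ c) c ≠ 0 := by
    intro c
    obtain ⟨b, hbn⟩ := colnz P2 L2 hL2 c
    by_cases hb : b = φ c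
    · rwa [hb] at hbn
    · exact absurd (hP2supp c b hb) hbn
  have hP1supp : ∀ c a, a ≠ φ c → P1 a c = 0 := by
    intro c a ha
    have := hzero a (φ c) (Ne.symm ha) c
    rcases mul_eq_zero.mp this with h | h
    · exact h
    · exact absurd h (hP2nz c)
  have hinj : Function.Injective φ := by
    intro c1 c2 hc
    by_contra hne
    have e21 := congrFun (congrFun hL1 c2) c1
    have e22 := congrFun (congrFun hL1 c2) c2
    rw [Matrix.mul_apply, Matrix.one_apply_ne (Ne.symm hne)] at e21
    rw [Matrix.mul_apply, Matrix.one_apply_eq] at e22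
    rw [Finset.sum_eq_single (φ c1) (fun a _ ha => by rw [hP1supp c1 a ha, mul_zero])
      (fun h => absurd (Finset.mem_univ _) h)] at e21
    have hL1z : L1 c2 (φ c1) = 0 := by
      rcases mul_eq_zero.mp e21 with h | h
      · exact h
      · exact absurd h (hφ c1)
    rw [Finset.sum_eq_single (φ c2) (fun a _ ha => by rw [hP1supp c2 a ha, mul_zero])
      (fun h => absurd (Finset.mem_univ _) h)] at e22
    rw [← hc, hL1z, zero_mul] at e22
    exact one_ne_zero e22.symm
  have hbij : Function.Bijective φ := (Finite.injective_iff_bijective).mp hinj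
  have hP3supp : ∀ c d, d ≠ φ c → P3 d c = 0 := by
    intro c d hd
    have hTT := hT (φ c) (φ c) d
    rw [if_neg (by tauto)] at hTT
    rw [Finset.sum_eq_single c (fun c' _ hc' => by
      rw [hP1supp c' (φ c) (fun h => hc' (hinj h.symm))]
      ring) (fun h => absurd (Finset.mem_univ _) h)] at hTT
    have : ν' c * P1 (φ c) c * P2 (φ c) c ≠ 0 :=
      mul_ne_zero (mul_ne_zero (hpos' c).ne' (hφ c)) (hP2nz c)
    rcases mul_eq_zero.mp hTT with h | h
    · exact absurd h this
    · exact h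
  exact ⟨φ, hbij, hP1supp, hP2supp, hP3supp⟩

set_option maxHeartbeats 2000000 in
/-- Proposition 3(b): with three pure children per latent variable
and full-rank pure-child CPTs, all parameters are identifiable up to a
relabeling of the latent variables and of their categories. -/
theorem params_identifiable
    {J K V H : ℕ} [NeZero H] (hH : 2 ≤ H) (hVH : H ≤ V) (hJ : 3 * K ≤ J)
    (G : Fin J → Fin K → Bool)
    (hfirst : ∀ k : Fin K, co G ⟨k.1, by have := k.isLt; omega⟩ = {k})
    (hsecond : ∀ k : Fin K, co G ⟨K + k.1, by have := k.isLt; omega⟩ = {k})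
    (hthird : ∀ k : Fin K, co G ⟨2 * K + k.1, by have := k.isLt; omega⟩ = {k})
    (ν ν' : (Fin K → Fin H) → ℝ)
    (θ θ' : Fin J → (Fin K → Fin H) → Fin V → ℝ)
    (hdep : DependsOnlyOnCo G θ) (hcpt : IsCPT θ) (hpmf : IsPMF ν)
    (hpos : ∀ a, 0 < ν a)
    (hdep' : DependsOnlyOnCo G θ') (hcpt' : IsCPT θ') (hpmf' : IsPMF ν')
    (hpos' : ∀ a, 0 < ν' a)
    (hrk : ∀ j : Fin J, j.1 < 3 * K → (cpt θ {j} (co G j)).rank = H)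
    (hrk' : ∀ j : Fin J, j.1 < 3 * K → (cpt θ' {j} (co G j)).rank = H)
    (heq : jointP ν θ = jointP ν' θ') :
    ∃ (σ : Equiv.Perm (Fin K)) (π : Fin K → Equiv.Perm (Fin H)),
      (∀ (j : Fin J) (k : Fin K), G j k = G j (σ k)) ∧
      (∀ a : Fin K → Fin H, ν' a = ν (fun k => π k (a (σ k)))) ∧
      (∀ (j : Fin J) (a : Fin K → Fin H) (v : Fin V),
        θ' j a v = θ j (fun k => π k (a (σ k))) v) := by
  classical
  haveI : NeZero V := ⟨by omega⟩
  -- dual functionals for the three banks of pure children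
  have hW1ex : ∀ k : Fin K, ∃ W : Fin H → Fin V → ℝ, ∀ (h : Fin H) (c : Fin K → Fin H),
      ∑ v, W h v * θ ⟨k.1, by have := k.isLt; omega⟩ c v = if c k = h then 1 else 0 :=
    fun k => pure_child_W hdep _ k (hfirst k)
      (hrk _ (by simp only [Fin.val_mk]; have := k.isLt; omega))
  have hW2ex : ∀ k : Fin K, ∃ W : Fin H → Fin V → ℝ, ∀ (h : Fin H) (c : Fin K → Fin H),
      ∑ v, W h v * θ ⟨K + k.1, by have := k.isLt; omega⟩ c v = if c k = h then 1 else 0 :=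
    fun k => pure_child_W hdep _ k (hsecond k)
      (hrk _ (by simp only [Fin.val_mk]; have := k.isLt; omega))
  have hW3ex : ∀ k : Fin K, ∃ W : Fin H → Fin V → ℝ, ∀ (h : Fin H) (c : Fin K → Fin H),
      ∑ v, W h v * θ ⟨2 * K + k.1, by have := k.isLt; omega⟩ c v = if c k = h then 1 else 0 :=
    fun k => pure_child_W hdep _ k (hthird k)
      (hrk _ (by simp only [Fin.val_mk]; have := k.isLt; omega))
  choose W1 hW1 using hW1ex
  choose W2 hW2 using hW2ex
  choose W3 hW3 using hW3ex
  -- primed per-coordinate factors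
  have hp1ex : ∀ (k : Fin K) (h : Fin H), ∃ f : Fin H → ℝ, ∀ c : Fin K → Fin H,
      ∑ v, W1 k h v * θ' ⟨k.1, by have := k.isLt; omega⟩ c v = f (c k) := by
    intro k h
    refine ⟨fun h' => ∑ v, W1 k h v * θ' ⟨k.1, by have := k.isLt; omega⟩ (fun _ => h') v,
      fun c => Finset.sum_congr rfl fun v _ => ?_⟩
    congr 1
    refine congrFun (hdep' _ c (fun _ => c k) fun k' hk' => ?_) v
    rw [hfirst k] at hk'
    rcases Finset.mem_singleton.mp hk' with rfl
    rfl
  have hp2ex : ∀ (k : Fin K) (h : Fin H), ∃ f : Fin H → ℝ, ∀ c : Fin K → Fin H,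
      ∑ v, W2 k h v * θ' ⟨K + k.1, by have := k.isLt; omega⟩ c v = f (c k) := by
    intro k h
    refine ⟨fun h' => ∑ v, W2 k h v * θ' ⟨K + k.1, by have := k.isLt; omega⟩ (fun _ => h') v,
      fun c => Finset.sum_congr rfl fun v _ => ?_⟩
    congr 1
    refine congrFun (hdep' _ c (fun _ => c k) fun k' hk' => ?_) v
    rw [hsecond k] at hk'
    rcases Finset.mem_singleton.mp hk' with rfl
    rfl
  have hp3ex : ∀ (k : Fin K) (h : Fin H), ∃ f : Fin H → ℝ, ∀ c : Fin K → Fin H,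
      ∑ v, W3 k h v * θ' ⟨2 * K + k.1, by have := k.isLt; omega⟩ c v = f (c k) := by
    intro k h
    refine ⟨fun h' => ∑ v, W3 k h v * θ' ⟨2 * K + k.1, by have := k.isLt; omega⟩ (fun _ => h') v,
      fun c => Finset.sum_congr rfl fun v _ => ?_⟩
    congr 1
    refine congrFun (hdep' _ c (fun _ => c k) fun k' hk' => ?_) v
    rw [hthird k] at hk'
    rcases Finset.mem_singleton.mp hk' with rfl
    rfl
  choose p1 hp1 using hp1ex
  choose p2 hp2 using hp2ex
  choose p3 hp3 using hp3ex
  obtain ⟨P1f, hP1fdef⟩ : ∃ f : (Fin K → Fin H) → (Fin K → Fin H) → ℝ,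
      f = fun a c => ∏ k, p1 k (a k) (c k) := ⟨_, rfl⟩
  obtain ⟨P2f, hP2fdef⟩ : ∃ f : (Fin K → Fin H) → (Fin K → Fin H) → ℝ,
      f = fun a c => ∏ k, p2 k (a k) (c k) := ⟨_, rfl⟩
  obtain ⟨P3f, hP3fdef⟩ : ∃ f : (Fin K → Fin H) → (Fin K → Fin H) → ℝ,
      f = fun a c => ∏ k, p3 k (a k) (c k) := ⟨_, rfl⟩
  have hP1f : ∀ a c, P1f a c = ∏ k, p1 k (a k) (c k) := fun a c => by rw [hP1fdef]
  have hP2f : ∀ a c, P2f a c = ∏ k, p2 k (a k) (c k) := fun a c => by rw [hP2fdef]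
  have hP3f : ∀ a c, P3f a c = ∏ k, p3 k (a k) (c k) := fun a c => by rw [hP3fdef]
  have hone : ∀ (θh : Fin J → (Fin K → Fin H) → Fin V → ℝ), IsCPT θh →
      ∀ (j : Fin J) (c : Fin K → Fin H), (∑ v, (1:ℝ) * θh j c v) = 1 := by
    intro θh hh j c
    simp only [one_mul]
    exact (hh j c).2
  have hrest1 : ∀ (θh : Fin J → (Fin K → Fin H) → Fin V → ℝ), IsCPT θh →
      ∀ c : Fin K → Fin H, (∏ j ∈ Finset.univ.filter (fun j : Fin J => 3 * K ≤ j.1),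
        ∑ v, (1:ℝ) * θh j c v) = 1 := by
    intro θh hh c
    exact Finset.prod_eq_one fun j _ => hone θh hh j c
  have hslot : ∀ (θh : Fin J → (Fin K → Fin H) → Fin V → ℝ) (j : Fin J)
      (c : Fin K → Fin H) (v₀ : Fin V),
      (∑ v, (if v = v₀ then (1:ℝ) else 0) * θh j c v) = θh j c v₀ := by
    intro θh j c v₀
    simp [ite_mul]
  -- pair instance (1,2)
  have hP12 : ∀ a b : Fin K → Fin H,
      ∑ c, ν' c * (P1f a c * P2f b c) = if b = a then ν a else 0 := by
    intro a b
    have e1 := instance_eval hJ ν θ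
      (fun k => W1 k (a k)) (fun k => W2 k (b k)) (fun _ _ => 1) (fun _ _ => 1)
      (fun k c => if c k = a k then 1 else 0) (fun k c => if c k = b k then 1 else 0)
      (fun _ _ => 1) (fun _ => 1)
      (fun k c => hW1 k (a k) c) (fun k c => hW2 k (b k) c)
      (fun k c => hone θ hcpt _ c) (hrest1 θ hcpt)
    have e2 := instance_eval hJ ν' θ'
      (fun k => W1 k (a k)) (fun k => W2 k (b k)) (fun _ _ => 1) (fun _ _ => 1)
      (fun k c => p1 k (a k) (c k)) (fun k c => p2 k (b k) (c k))
      (fun _ _ => 1) (fun _ => 1)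
      (fun k c => hp1 k (a k) c) (fun k c => hp2 k (b k) c)
      (fun k c => hone θ' hcpt' _ c) (hrest1 θ' hcpt')
    have h := (e2.symm.trans (by rw [← heq])).trans e1
    simp only [prod_delta, Finset.prod_const_one, mul_one, ← hP1f, ← hP2f] at h
    rw [h]
    rw [Finset.sum_eq_single a (fun c _ hc => by simp [hc])
      (fun hn => absurd (Finset.mem_univ a) hn)]
    by_cases hba : b = a
    · simp [hba]
    · simp [hba, show ¬ a = b from fun h => hba h.symm]
  -- pair instance (1,3)
  have hP13 : ∀ a b : Fin K → Fin H,
      ∑ c, ν' c * (P1f a c * P3f b c) = if b = a then ν a else 0 := by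
    intro a b
    have e1 := instance_eval hJ ν θ
      (fun k => W1 k (a k)) (fun _ _ => 1) (fun k => W3 k (b k)) (fun _ _ => 1)
      (fun k c => if c k = a k then 1 else 0) (fun _ _ => 1)
      (fun k c => if c k = b k then 1 else 0) (fun _ => 1)
      (fun k c => hW1 k (a k) c) (fun k c => hone θ hcpt _ c)
      (fun k c => hW3 k (b k) c) (hrest1 θ hcpt)
    have e2 := instance_eval hJ ν' θ'
      (fun k => W1 k (a k)) (fun _ _ => 1) (fun k => W3 k (b k)) (fun _ _ => 1)
      (fun k c => p1 k (a k) (c k)) (fun _ _ => 1)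
      (fun k c => p3 k (b k) (c k)) (fun _ => 1)
      (fun k c => hp1 k (a k) c) (fun k c => hone θ' hcpt' _ c)
      (fun k c => hp3 k (b k) c) (hrest1 θ' hcpt')
    have h := (e2.symm.trans (by rw [← heq])).trans e1
    simp only [prod_delta, Finset.prod_const_one, mul_one, ← hP1f, ← hP3f] at h
    rw [h]
    rw [Finset.sum_eq_single a (fun c _ hc => by simp [hc])
      (fun hn => absurd (Finset.mem_univ a) hn)]
    by_cases hba : b = a
    · simp [hba]
    · simp [hba, show ¬ a = b from fun h => hba h.symm]
  -- pair instance (2,3)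
  have hP23 : ∀ a b : Fin K → Fin H,
      ∑ c, ν' c * (P2f a c * P3f b c) = if b = a then ν a else 0 := by
    intro a b
    have e1 := instance_eval hJ ν θ
      (fun _ _ => 1) (fun k => W2 k (a k)) (fun k => W3 k (b k)) (fun _ _ => 1)
      (fun _ _ => 1) (fun k c => if c k = a k then 1 else 0)
      (fun k c => if c k = b k then 1 else 0) (fun _ => 1)
      (fun k c => hone θ hcpt _ c) (fun k c => hW2 k (a k) c)
      (fun k c => hW3 k (b k) c) (hrest1 θ hcpt)
    have e2 := instance_eval hJ ν' θ'
      (fun _ _ => 1) (fun k => W2 k (a k)) (fun k => W3 k (b k)) (fun _ _ => 1)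
      (fun _ _ => 1) (fun k c => p2 k (a k) (c k))
      (fun k c => p3 k (b k) (c k)) (fun _ => 1)
      (fun k c => hone θ' hcpt' _ c) (fun k c => hp2 k (a k) c)
      (fun k c => hp3 k (b k) c) (hrest1 θ' hcpt')
    have h := (e2.symm.trans (by rw [← heq])).trans e1
    simp only [prod_delta, Finset.prod_const_one, mul_one, one_mul, ← hP2f, ← hP3f] at h
    rw [h]
    rw [Finset.sum_eq_single a (fun c _ hc => by simp [hc])
      (fun hn => absurd (Finset.mem_univ a) hn)]
    by_cases hba : b = a
    · simp [hba]
    · simp [hba, show ¬ a = b from fun h => hba h.symm]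
  -- triple instance
  have hT : ∀ a b d : Fin K → Fin H,
      ∑ c, ν' c * (P1f a c * P2f b c * P3f d c) = if b = a ∧ d = a then ν a else 0 := by
    intro a b d
    have e1 := instance_eval hJ ν θ
      (fun k => W1 k (a k)) (fun k => W2 k (b k)) (fun k => W3 k (d k)) (fun _ _ => 1)
      (fun k c => if c k = a k then 1 else 0) (fun k c => if c k = b k then 1 else 0)
      (fun k c => if c k = d k then 1 else 0) (fun _ => 1)
      (fun k c => hW1 k (a k) c) (fun k c => hW2 k (b k) c)
      (fun k c => hW3 k (d k) c) (hrest1 θ hcpt)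
    have e2 := instance_eval hJ ν' θ'
      (fun k => W1 k (a k)) (fun k => W2 k (b k)) (fun k => W3 k (d k)) (fun _ _ => 1)
      (fun k c => p1 k (a k) (c k)) (fun k c => p2 k (b k) (c k))
      (fun k c => p3 k (d k) (c k)) (fun _ => 1)
      (fun k c => hp1 k (a k) c) (fun k c => hp2 k (b k) c)
      (fun k c => hp3 k (d k) c) (hrest1 θ' hcpt')
    have h := (e2.symm.trans (by rw [← heq])).trans e1
    simp only [prod_delta, mul_one, ← hP1f, ← hP2f, ← hP3f] at h
    rw [h]
    rw [Finset.sum_eq_single a (fun c _ hc => by simp [hc])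
      (fun hn => absurd (Finset.mem_univ a) hn)]
    by_cases hba : b = a
    · by_cases hda : d = a
      · simp [hba, hda]
      · simp [hba, hda, show ¬ a = d from fun h => hda h.symm]
    · simp [hba, show ¬ a = b from fun h => hba h.symm]
  -- slot instance : view-1 region
  have hS1 : ∀ (j₀ : Fin J), j₀.1 < K → ∀ (v₀ : Fin V) (a b : Fin K → Fin H),
      ∑ c, ν' c * (θ' j₀ c v₀ * P2f a c * P3f b c)
        = if b = a then ν a * θ j₀ a v₀ else 0 := by
    intro j₀ hj v₀ a b
    have hcol : ∀ (Y : ℝ),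
        (∏ k : Fin K, if (k : ℕ) = (j₀ : ℕ) then Y else 1) = Y := by
      intro Y
      rw [Finset.prod_eq_single (⟨j₀.1, hj⟩ : Fin K)
        (fun k _ hk => if_neg (fun hh => hk (Fin.val_injective hh)))
        (fun hn => absurd (Finset.mem_univ _) hn)]
      exact if_pos rfl
    have hslot1 : ∀ (θh : Fin J → (Fin K → Fin H) → Fin V → ℝ), IsCPT θh →
        ∀ (k : Fin K) (c : Fin K → Fin H),
        (∑ v, (if (k : ℕ) = (j₀ : ℕ) then (if v = v₀ then (1:ℝ) else 0) else 1)
          * θh ⟨k.1, by have := k.isLt; omega⟩ c v)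
        = if (k : ℕ) = (j₀ : ℕ) then θh j₀ c v₀ else 1 := by
      intro θh hh k c
      by_cases hk : (k : ℕ) = (j₀ : ℕ)
      · simp only [if_pos hk]
        rw [hslot θh _ c v₀]
        exact congrFun (congrFun (congrArg θh (Fin.val_injective hk)) c) v₀
      · simp only [if_neg hk]
        exact hone θh hh _ c
    have e1 := instance_eval hJ ν θ
      (fun k v => if (k : ℕ) = (j₀ : ℕ) then (if v = v₀ then (1:ℝ) else 0) else 1)
      (fun k => W2 k (a k)) (fun k => W3 k (b k)) (fun _ _ => 1)
      (fun k c => if (k : ℕ) = (j₀ : ℕ) then θ j₀ c v₀ else 1)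
      (fun k c => if c k = a k then 1 else 0) (fun k c => if c k = b k then 1 else 0)
      (fun _ => 1)
      (hslot1 θ hcpt) (fun k c => hW2 k (a k) c) (fun k c => hW3 k (b k) c) (hrest1 θ hcpt)
    have e2 := instance_eval hJ ν' θ'
      (fun k v => if (k : ℕ) = (j₀ : ℕ) then (if v = v₀ then (1:ℝ) else 0) else 1)
      (fun k => W2 k (a k)) (fun k => W3 k (b k)) (fun _ _ => 1)
      (fun k c => if (k : ℕ) = (j₀ : ℕ) then θ' j₀ c v₀ else 1)
      (fun k c => p2 k (a k) (c k)) (fun k c => p3 k (b k) (c k)) (fun _ => 1)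
      (hslot1 θ' hcpt') (fun k c => hp2 k (a k) c) (fun k c => hp3 k (b k) c)
      (hrest1 θ' hcpt')
    have h := (e2.symm.trans (by rw [← heq])).trans e1
    simp only [prod_delta, mul_one, hcol, ← hP2f, ← hP3f] at h
    rw [h]
    rw [Finset.sum_eq_single a (fun c _ hc => by simp [hc])
      (fun hn => absurd (Finset.mem_univ a) hn)]
    by_cases hba : b = a
    · simp [hba]
    · simp [hba, show ¬ a = b from fun h => hba h.symm]
  -- slot instance : view-2 region
  have hS2 : ∀ (j₀ : Fin J), K ≤ j₀.1 → j₀.1 < 2 * K → ∀ (v₀ : Fin V) (a b : Fin K → Fin H),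
      ∑ c, ν' c * (P1f a c * θ' j₀ c v₀ * P3f b c)
        = if b = a then ν a * θ j₀ a v₀ else 0 := by
    intro j₀ hj1 hj2 v₀ a b
    have hcol : ∀ (Y : ℝ),
        (∏ k : Fin K, if K + (k : ℕ) = (j₀ : ℕ) then Y else 1) = Y := by
      intro Y
      rw [Finset.prod_eq_single (⟨j₀.1 - K, by omega⟩ : Fin K)
        (fun k _ hk => if_neg (fun hh => hk (Fin.val_injective (by
          simp only [Fin.val_mk]; omega))))
        (fun hn => absurd (Finset.mem_univ _) hn)]
      rw [if_pos (by simp only [Fin.val_mk]; omega)]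
    have hslot2 : ∀ (θh : Fin J → (Fin K → Fin H) → Fin V → ℝ), IsCPT θh →
        ∀ (k : Fin K) (c : Fin K → Fin H),
        (∑ v, (if K + (k : ℕ) = (j₀ : ℕ) then (if v = v₀ then (1:ℝ) else 0) else 1)
          * θh ⟨K + k.1, by have := k.isLt; omega⟩ c v)
        = if K + (k : ℕ) = (j₀ : ℕ) then θh j₀ c v₀ else 1 := by
      intro θh hh k c
      by_cases hk : K + (k : ℕ) = (j₀ : ℕ)
      · simp only [if_pos hk]
        rw [hslot θh _ c v₀]
        exact congrFun (congrFun (congrArg θh (Fin.val_injective hk)) c) v₀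
      · simp only [if_neg hk]
        exact hone θh hh _ c
    have e1 := instance_eval hJ ν θ
      (fun k => W1 k (a k))
      (fun k v => if K + (k : ℕ) = (j₀ : ℕ) then (if v = v₀ then (1:ℝ) else 0) else 1)
      (fun k => W3 k (b k)) (fun _ _ => 1)
      (fun k c => if c k = a k then 1 else 0)
      (fun k c => if K + (k : ℕ) = (j₀ : ℕ) then θ j₀ c v₀ else 1)
      (fun k c => if c k = b k then 1 else 0) (fun _ => 1)
      (fun k c => hW1 k (a k) c) (hslot2 θ hcpt) (fun k c => hW3 k (b k) c) (hrest1 θ hcpt)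
    have e2 := instance_eval hJ ν' θ'
      (fun k => W1 k (a k))
      (fun k v => if K + (k : ℕ) = (j₀ : ℕ) then (if v = v₀ then (1:ℝ) else 0) else 1)
      (fun k => W3 k (b k)) (fun _ _ => 1)
      (fun k c => p1 k (a k) (c k))
      (fun k c => if K + (k : ℕ) = (j₀ : ℕ) then θ' j₀ c v₀ else 1)
      (fun k c => p3 k (b k) (c k)) (fun _ => 1)
      (fun k c => hp1 k (a k) c) (hslot2 θ' hcpt') (fun k c => hp3 k (b k) c)
      (hrest1 θ' hcpt')
    have h := (e2.symm.trans (by rw [← heq])).trans e1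
    simp only [prod_delta, mul_one, hcol, ← hP1f, ← hP3f] at h
    rw [h]
    rw [Finset.sum_eq_single a (fun c _ hc => by simp [hc])
      (fun hn => absurd (Finset.mem_univ a) hn)]
    by_cases hba : b = a
    · simp [hba]
    · simp [hba, show ¬ a = b from fun h => hba h.symm]
  -- slot instance : high region
  have hS3 : ∀ (j₀ : Fin J), 2 * K ≤ j₀.1 → ∀ (v₀ : Fin V) (a b : Fin K → Fin H),
      ∑ c, ν' c * (P1f a c * P2f b c * θ' j₀ c v₀)
        = if b = a then ν a * θ j₀ a v₀ else 0 := by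
    intro j₀ hj v₀ a b
    rcases Nat.lt_or_ge j₀.1 (3 * K) with h3 | h3
    · -- j₀ is a view-3 pure child
      have hcol : ∀ (Y : ℝ),
          (∏ k : Fin K, if 2 * K + (k : ℕ) = (j₀ : ℕ) then Y else 1) = Y := by
        intro Y
        rw [Finset.prod_eq_single (⟨j₀.1 - 2 * K, by omega⟩ : Fin K)
          (fun k _ hk => if_neg (fun hh => hk (Fin.val_injective (by
            simp only [Fin.val_mk]; omega))))
          (fun hn => absurd (Finset.mem_univ _) hn)]
        rw [if_pos (by simp only [Fin.val_mk]; omega)]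
      have hslot3 : ∀ (θh : Fin J → (Fin K → Fin H) → Fin V → ℝ), IsCPT θh →
          ∀ (k : Fin K) (c : Fin K → Fin H),
          (∑ v, (if 2 * K + (k : ℕ) = (j₀ : ℕ) then (if v = v₀ then (1:ℝ) else 0) else 1)
            * θh ⟨2 * K + k.1, by have := k.isLt; omega⟩ c v)
          = if 2 * K + (k : ℕ) = (j₀ : ℕ) then θh j₀ c v₀ else 1 := by
        intro θh hh k c
        by_cases hk : 2 * K + (k : ℕ) = (j₀ : ℕ)
        · simp only [if_pos hk]
          rw [hslot θh _ c v₀]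
          exact congrFun (congrFun (congrArg θh (Fin.val_injective hk)) c) v₀
        · simp only [if_neg hk]
          exact hone θh hh _ c
      have e1 := instance_eval hJ ν θ
        (fun k => W1 k (a k)) (fun k => W2 k (b k))
        (fun k v => if 2 * K + (k : ℕ) = (j₀ : ℕ) then (if v = v₀ then (1:ℝ) else 0) else 1)
        (fun _ _ => 1)
        (fun k c => if c k = a k then 1 else 0) (fun k c => if c k = b k then 1 else 0)
        (fun k c => if 2 * K + (k : ℕ) = (j₀ : ℕ) then θ j₀ c v₀ else 1) (fun _ => 1)
        (fun k c => hW1 k (a k) c) (fun k c => hW2 k (b k) c) (hslot3 θ hcpt)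
        (hrest1 θ hcpt)
      have e2 := instance_eval hJ ν' θ'
        (fun k => W1 k (a k)) (fun k => W2 k (b k))
        (fun k v => if 2 * K + (k : ℕ) = (j₀ : ℕ) then (if v = v₀ then (1:ℝ) else 0) else 1)
        (fun _ _ => 1)
        (fun k c => p1 k (a k) (c k)) (fun k c => p2 k (b k) (c k))
        (fun k c => if 2 * K + (k : ℕ) = (j₀ : ℕ) then θ' j₀ c v₀ else 1) (fun _ => 1)
        (fun k c => hp1 k (a k) c) (fun k c => hp2 k (b k) c) (hslot3 θ' hcpt')
        (hrest1 θ' hcpt')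
      have h := (e2.symm.trans (by rw [← heq])).trans e1
      simp only [prod_delta, mul_one, hcol, ← hP1f, ← hP2f] at h
      rw [h]
      rw [Finset.sum_eq_single a (fun c _ hc => by simp [hc])
        (fun hn => absurd (Finset.mem_univ a) hn)]
      by_cases hba : b = a
      · simp [hba]
      · simp [hba, show ¬ a = b from fun h => hba h.symm]
    · -- j₀ is in the rest region
      have hrslot : ∀ (θh : Fin J → (Fin K → Fin H) → Fin V → ℝ), IsCPT θh →
          ∀ c : Fin K → Fin H,
          (∏ j ∈ Finset.univ.filter (fun j : Fin J => 3 * K ≤ j.1),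
            ∑ v, (if j = j₀ then (if v = v₀ then (1:ℝ) else 0) else 1) * θh j c v)
          = θh j₀ c v₀ := by
        intro θh hh c
        rw [Finset.prod_eq_single j₀
          (fun j _ hjne => by rw [Finset.sum_congr rfl fun v _ => by rw [if_neg hjne]]
                              exact hone θh hh j c)
          (fun hn => absurd (Finset.mem_filter.mpr ⟨Finset.mem_univ j₀, h3⟩) hn)]
        rw [Finset.sum_congr rfl fun v _ => by rw [if_pos rfl]]
        exact hslot θh j₀ c v₀
      have e1 := instance_eval hJ ν θ
        (fun k => W1 k (a k)) (fun k => W2 k (b k)) (fun _ _ => 1)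
        (fun j v => if j = j₀ then (if v = v₀ then (1:ℝ) else 0) else 1)
        (fun k c => if c k = a k then 1 else 0) (fun k c => if c k = b k then 1 else 0)
        (fun _ _ => 1) (fun c => θ j₀ c v₀)
        (fun k c => hW1 k (a k) c) (fun k c => hW2 k (b k) c)
        (fun k c => hone θ hcpt _ c) (hrslot θ hcpt)
      have e2 := instance_eval hJ ν' θ'
        (fun k => W1 k (a k)) (fun k => W2 k (b k)) (fun _ _ => 1)
        (fun j v => if j = j₀ then (if v = v₀ then (1:ℝ) else 0) else 1)
        (fun k c => p1 k (a k) (c k)) (fun k c => p2 k (b k) (c k))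
        (fun _ _ => 1) (fun c => θ' j₀ c v₀)
        (fun k c => hp1 k (a k) c) (fun k c => hp2 k (b k) c)
        (fun k c => hone θ' hcpt' _ c) (hrslot θ' hcpt')
      have h := (e2.symm.trans (by rw [← heq])).trans e1
      simp only [prod_delta, Finset.prod_const_one, mul_one, one_mul, ← hP1f, ← hP2f] at h
      rw [h]
      rw [Finset.sum_eq_single a (fun c _ hc => by simp [hc])
        (fun hn => absurd (Finset.mem_univ a) hn)]
      by_cases hba : b = a
      · simp [hba]
      · simp [hba, show ¬ a = b from fun h => hba h.symm]
  -- extract the permutation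
  haveI : Nonempty (Fin K → Fin H) := ⟨fun _ => 0⟩
  obtain ⟨φ, hbij, hsupp1, hsupp2, hsupp3⟩ := perm_support ν ν' hpos hpos' P1f P2f P3f
    (fun a b d => (Finset.sum_congr rfl fun c _ => by ring).trans (hT a b d))
    (fun a b => (Finset.sum_congr rfl fun c _ => by ring).trans (hP12 a b))
    (fun a b => (Finset.sum_congr rfl fun c _ => by ring).trans (hP13 a b))
  -- diagonal collapses
  have hν12 : ∀ c, ν' c * (P1f (φ c) c * P2f (φ c) c) = ν (φ c) := by
    intro c
    have h := hP12 (φ c) (φ c)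
    rw [if_pos rfl] at h
    rw [Finset.sum_eq_single c (fun c' _ hc' => by
        rw [hsupp1 c' (φ c) (fun hh => hc' (hbij.1 hh).symm)]; ring)
      (fun hn => absurd (Finset.mem_univ c) hn)] at h
    exact h
  have hν13 : ∀ c, ν' c * (P1f (φ c) c * P3f (φ c) c) = ν (φ c) := by
    intro c
    have h := hP13 (φ c) (φ c)
    rw [if_pos rfl] at h
    rw [Finset.sum_eq_single c (fun c' _ hc' => by
        rw [hsupp1 c' (φ c) (fun hh => hc' (hbij.1 hh).symm)]; ring)
      (fun hn => absurd (Finset.mem_univ c) hn)] at h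
    exact h
  have hν23 : ∀ c, ν' c * (P2f (φ c) c * P3f (φ c) c) = ν (φ c) := by
    intro c
    have h := hP23 (φ c) (φ c)
    rw [if_pos rfl] at h
    rw [Finset.sum_eq_single c (fun c' _ hc' => by
        rw [hsupp2 c' (φ c) (fun hh => hc' (hbij.1 hh).symm)]; ring)
      (fun hn => absurd (Finset.mem_univ c) hn)] at h
    exact h
  -- matching of conditional probability tables
  have hθm : ∀ (j : Fin J) (c : Fin K → Fin H) (v : Fin V), θ' j c v = θ j (φ c) v := by
    intro j c v
    rcases Nat.lt_or_ge j.1 K with h1 | h1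
    · have hs := hS1 j h1 v (φ c) (φ c)
      rw [if_pos rfl] at hs
      rw [Finset.sum_eq_single c (fun c' _ hc' => by
          rw [hsupp2 c' (φ c) (fun hh => hc' (hbij.1 hh).symm)]; ring)
        (fun hn => absurd (Finset.mem_univ c) hn)] at hs
      have hl : ν' c * (θ' j c v * P2f (φ c) c * P3f (φ c) c)
          = ν' c * (P2f (φ c) c * P3f (φ c) c) * θ' j c v := by ring
      rw [hl, hν23 c] at hs
      exact mul_left_cancel₀ (hpos (φ c)).ne' hs
    rcases Nat.lt_or_ge j.1 (2 * K) with h2 | h2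
    · have hs := hS2 j h1 h2 v (φ c) (φ c)
      rw [if_pos rfl] at hs
      rw [Finset.sum_eq_single c (fun c' _ hc' => by
          rw [hsupp1 c' (φ c) (fun hh => hc' (hbij.1 hh).symm)]; ring)
        (fun hn => absurd (Finset.mem_univ c) hn)] at hs
      have hl : ν' c * (P1f (φ c) c * θ' j c v * P3f (φ c) c)
          = ν' c * (P1f (φ c) c * P3f (φ c) c) * θ' j c v := by ring
      rw [hl, hν13 c] at hs
      exact mul_left_cancel₀ (hpos (φ c)).ne' hs
    · have hs := hS3 j h2 v (φ c) (φ c)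
      rw [if_pos rfl] at hs
      rw [Finset.sum_eq_single c (fun c' _ hc' => by
          rw [hsupp1 c' (φ c) (fun hh => hc' (hbij.1 hh).symm)]; ring)
        (fun hn => absurd (Finset.mem_univ c) hn)] at hs
      have hl : ν' c * (P1f (φ c) c * P2f (φ c) c * θ' j c v)
          = ν' c * (P1f (φ c) c * P2f (φ c) c) * θ' j c v := by ring
      rw [hl, hν12 c] at hs
      exact mul_left_cancel₀ (hpos (φ c)).ne' hs
  -- matching of the latent distribution
  set Φ : (Fin K → Fin H) ≃ (Fin K → Fin H) := Equiv.ofBijective φ hbij with hΦdef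
  have hΦapp : ∀ c, Φ c = φ c := fun c => by rw [hΦdef]; rfl
  have hjoint2 : jointP ν θ = jointP (fun c => ν' (Φ.symm c)) θ := by
    funext y
    rw [heq]
    show (∑ c, ν' c * ∏ j, θ' j c (y j))
      = ∑ a, (fun c => ν' (Φ.symm c)) a * ∏ j, θ j a (y j)
    rw [← Equiv.sum_comp Φ (fun a => (fun c => ν' (Φ.symm c)) a * ∏ j, θ j a (y j))]
    refine Finset.sum_congr rfl fun c _ => ?_
    have h1 : Φ.symm (Φ c) = c := Equiv.symm_apply_apply Φ c
    show ν' c * ∏ j, θ' j c (y j) = ν' (Φ.symm (Φ c)) * ∏ j, θ j (Φ c) (y j)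
    rw [h1]
    rw [hΦapp c]
    congr 1
    exact Finset.prod_congr rfl fun j _ => hθm j c (y j)
  have hνm : ∀ b : Fin K → Fin H, ν b = ν' (Φ.symm b) := by
    intro b
    have e1 := instance_eval hJ ν θ
      (fun k => W1 k (b k)) (fun _ _ => 1) (fun _ _ => 1) (fun _ _ => 1)
      (fun k c => if c k = b k then 1 else 0) (fun _ _ => 1) (fun _ _ => 1) (fun _ => 1)
      (fun k c => hW1 k (b k) c) (fun k c => hone θ hcpt _ c)
      (fun k c => hone θ hcpt _ c) (hrest1 θ hcpt)
    have e2 := instance_eval hJ (fun c => ν' (Φ.symm c)) θ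
      (fun k => W1 k (b k)) (fun _ _ => 1) (fun _ _ => 1) (fun _ _ => 1)
      (fun k c => if c k = b k then 1 else 0) (fun _ _ => 1) (fun _ _ => 1) (fun _ => 1)
      (fun k c => hW1 k (b k) c) (fun k c => hone θ hcpt _ c)
      (fun k c => hone θ hcpt _ c) (hrest1 θ hcpt)
    have h := (e1.symm.trans (by rw [hjoint2])).trans e2
    simp only [prod_delta, Finset.prod_const_one, mul_one] at h
    have hL : (∑ c, ν c * if c = b then (1:ℝ) else 0) = ν b := by
      rw [Finset.sum_eq_single b (fun c _ hc => by simp [hc])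
        (fun hn => absurd (Finset.mem_univ b) hn)]
      simp
    have hR : (∑ c, ν' (Φ.symm c) * if c = b then (1:ℝ) else 0) = ν' (Φ.symm b) := by
      rw [Finset.sum_eq_single b (fun c _ hc => by simp [hc])
        (fun hn => absurd (Finset.mem_univ b) hn)]
      simp
    rw [hL, hR] at h
    exact h
  have hν' : ∀ c, ν' c = ν (φ c) := by
    intro c
    have h := hνm (φ c)
    rw [show Φ.symm (φ c) = c from by
      rw [← hΦapp c, Equiv.symm_apply_apply]] at h
    exact h.symm
  -- coordinatewise structure of φ
  have hcoord : ∀ (k : Fin K) (c c' : Fin K → Fin H), c k = c' k → φ c k = φ c' k := by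
    intro k c c' hcc
    have hcols : ∀ v : Fin V, θ ⟨k.1, by have := k.isLt; omega⟩ (φ c) v
        = θ ⟨k.1, by have := k.isLt; omega⟩ (φ c') v := by
      intro v
      rw [← hθm _ c v, ← hθm _ c' v]
      refine congrFun (hdep' _ c c' fun k' hk' => ?_) v
      rw [hfirst k] at hk'
      rcases Finset.mem_singleton.mp hk' with rfl
      exact hcc
    have h1 := hW1 k (φ c k) (φ c)
    rw [if_pos rfl] at h1
    rw [Finset.sum_congr rfl (fun v _ => by rw [hcols v])] at h1
    have h2 := hW1 k (φ c k) (φ c')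
    rw [h1] at h2
    by_contra hne
    rw [if_neg (fun hh => hne hh.symm)] at h2
    exact one_ne_zero h2
  obtain ⟨π0, hπ0def⟩ : ∃ f : Fin K → Fin H → Fin H, f = fun k h => φ (fun _ => h) k :=
    ⟨_, rfl⟩
  have hφprod : ∀ (c : Fin K → Fin H) (k : Fin K), φ c k = π0 k (c k) := by
    intro c k
    rw [hπ0def]
    exact hcoord k c (fun _ => c k) rfl
  have hπinj : ∀ k, Function.Injective (π0 k) := by
    intro k h1 h2 hEq
    have hc1 : φ (Function.update (fun _ => h2) k h1) = φ (fun _ => h2) := by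
      funext k'
      by_cases hk' : k' = k
      · subst hk'
        rw [hφprod _ k', hφprod _ k', Function.update_self]
        exact hEq
      · rw [hφprod _ k', hφprod _ k', Function.update_of_ne hk']
    have hc2 := hbij.1 hc1
    have hc3 := congrFun hc2 k
    rwa [Function.update_self] at hc3
  refine ⟨Equiv.refl (Fin K), fun k => Equiv.ofBijective (π0 k)
      ((Finite.injective_iff_bijective).mp (hπinj k)), fun j k => rfl, ?_, ?_⟩
  · intro a
    show ν' a = ν (fun k => π0 k (a k))
    rw [show (fun k => π0 k (a k)) = φ a from funext fun k => (hφprod a k).symm]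
    exact hν' a
  · intro j a v
    show θ' j a v = θ j (fun k => π0 k (a k)) v
    rw [show (fun k => π0 k (a k)) = φ a from funext fun k => (hφprod a k).symm]
    exact hθm j a v

end LBGM
end

section
/- In the discrete latent bipartite graphical model, suppose Assumption 2 holds. Let S_1, S_2 ⊆ [J] be disjoint sets with co(S_1) ⊆ co(S_2) and co(S_1) ≠ co(S_2), and suppose the V^{|S_1|} × H^{|co(S_1)|} matrix P(Y_{S_1} | A_{co(S_1)}) has full column rank H^{|co(S_1)|}. Then rank(P(Y_{S_1 ∪ S_2} | A_{co(S_2)})) > H^{|co(S_1)|}. -/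
open Matrix MeasureTheory

namespace LBGM

/-!
Pick `k₀ ∈ co(S₂) \ co(S₁)`, a child `j₀ ∈ S₂` of `k₀`, and (Assumption 2) configurations `t, t'`
differing only at `k₀` with `θ_{j₀}(· | t) ≠ θ_{j₀}(· | t')`. Take the `H^{|co(S₁)|}` columns of
`P(Y_{S₁ ∪ S₂} | A_{co(S₂)})` that vary `A_{co(S₁)}` with the other latents fixed at `t`, plus the
column at `t'`. Each column is the outer product of a column of `P(Y_{S₁} | A_{co(S₁)})`, which are
independent, with a probability vector in `Y_{S₂}`. The column at `t'` shares its `S₁`-factor only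
with the column at `t`, and the two `S₂`-factors have different `j₀`-marginals, hence are
independent; so all `H^{|co(S₁)|} + 1` columns are.
-/

section LinearAlgebra

variable {K ι β m n Y : Type*} [Field K]

theorem Matrix.card_le_rank_of_linearIndependent_col_comp [Fintype m] [Fintype n] [Fintype ι]
    {A : Matrix m n K} {f : ι → n} (h : LinearIndependent K (A.col ∘ f)) :
    Fintype.card ι ≤ A.rank := by
  rw [Matrix.rank_eq_finrank_span_cols, ← finrank_span_eq_card h]
  exact Submodule.finrank_mono (Submodule.span_mono (Set.range_comp_subset_range f A.col))

theorem Matrix.linearIndependent_col_of_rank_eq_card [Fintype m] [Fintype n] {A : Matrix m n K}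
    (h : A.rank = Fintype.card n) : LinearIndependent K A.col := by
  rw [linearIndependent_iff_card_eq_finrank_span, ← h, Matrix.rank_eq_finrank_span_cols]
  rfl

theorem linearIndepOn_pair_of_sum_eq_one [Fintype n] {v : ι → n → K} {i j : ι} (hij : i ≠ j)
    (hi : ∑ y, v i y = 1) (hj : ∑ y, v j y = 1) (hv : v i ≠ v j) : LinearIndepOn K v {i, j} := by
  have hi0 : v i ≠ 0 := fun h => by simp [h] at hi
  refine (linearIndepOn_pair_iff v hij hi0).2 fun c hc => hv ?_
  have hc1 : c = 1 := by
    simpa [← Finset.mul_sum, hi, hj] using congrArg (fun w => ∑ y, w y) hc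
  rw [← hc, hc1, one_smul]

theorem linearIndependent_mul_of_linearIndepOn_fiber [Fintype ι] [Fintype β] [DecidableEq β]
    {π₁ : Y → m} {π₂ : Y → n} (hπ : ∀ y₁ y₂, ∃ y, π₁ y = y₁ ∧ π₂ y = y₂) (σ : ι → β)
    {p : β → m → K} {q : ι → n → K} (hp : LinearIndependent K p)
    (hq : ∀ b, LinearIndepOn K q (σ ⁻¹' {b})) :
    LinearIndependent K fun i y => p (σ i) (π₁ y) * q i (π₂ y) := by
  rw [Fintype.linearIndependent_iff]
  intro g hg i
  have hfiber : ∀ y₂ b, ∑ i ∈ Finset.univ.filter (σ · = b), g i * q i y₂ = 0 := by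
    intro y₂
    refine Fintype.linearIndependent_iff.1 hp _ (funext fun y₁ => ?_)
    obtain ⟨y, rfl, rfl⟩ := hπ y₁ y₂
    have := congrFun hg y
    simp only [Finset.sum_apply, Pi.smul_apply, smul_eq_mul, Pi.zero_apply] at this ⊢
    rw [← this, ← Finset.sum_fiberwise Finset.univ σ]
    refine Finset.sum_congr rfl fun b _ => ?_
    rw [Finset.sum_mul]
    refine Finset.sum_congr rfl fun i hi => ?_
    rw [(Finset.mem_filter.1 hi).2]
    ring
  refine linearIndepOn_iff'.1 (hq (σ i)) (Finset.univ.filter (σ · = σ i)) g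
    (fun x hx => by simpa using hx) (funext fun y₂ => ?_) i (by simp)
  simpa using hfiber y₂ (σ i)

end LinearAlgebra

section ProductDistribution

variable {ι V : Type*} [Fintype ι] [DecidableEq ι] [Fintype V] {w : ι → V → ℝ}

theorem sum_prod_eq_one (hw : ∀ i, ∑ v, w i v = 1) : ∑ y : ι → V, ∏ i, w i (y i) = 1 := by
  rw [← Fintype.prod_sum]
  exact Finset.prod_eq_one fun i _ => hw i

theorem sum_ite_prod_eq [DecidableEq V] (hw : ∀ i, ∑ v, w i v = 1) (i : ι)
    (v : V) : ∑ y : ι → V, (if y i = v then ∏ j, w j (y j) else 0) = w i v := by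
  set w' := Function.update w i fun u => if u = v then w i u else 0
  have hterm : ∀ y : ι → V, (if y i = v then ∏ j, w j (y j) else 0) = ∏ j, w' j (y j) := by
    intro y
    split_ifs with hy
    · refine Finset.prod_congr rfl fun j _ => ?_
      rcases eq_or_ne j i with rfl | hj
      · simp [w', hy]
      · simp [w', hj]
    · exact (Finset.prod_eq_zero (Finset.mem_univ i) (by simp [w', hy])).symm
  have hrow : ∀ j, ∑ u, w' j u = if j = i then w i v else 1 := by
    intro j
    rcases eq_or_ne j i with rfl | hj
    · simp [w']
    · simp [w', hj, hw j]
  simp_rw [hterm, ← Fintype.prod_sum, hrow, Finset.prod_ite_eq', Finset.mem_univ, if_true]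

end ProductDistribution

theorem Finset.exists_restrict_eq_of_disjoint {α β : Type*} [Nonempty β] {s t : Finset α}
    (h : Disjoint s t) (f : s → β) (g : t → β) :
    ∃ x : α → β, s.restrict x = f ∧ t.restrict x = g := by
  classical
  inhabit β
  refine ⟨fun a => if ha : a ∈ s then f ⟨a, ha⟩ else if hb : a ∈ t then g ⟨a, hb⟩ else default,
    funext fun a => by simp [a.2], funext fun a => ?_⟩
  simp [Finset.disjoint_right.1 h a.2, a.2]

section ConditionalProbabilityTable

variable {J K V H : ℕ} [NeZero H] {G : Fin J → Fin K → Bool}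
  {θ : Fin J → (Fin K → Fin H) → Fin V → ℝ}

theorem sum_cpt_apply (hcpt : IsCPT θ) (M : Finset (Fin J)) (S : Finset (Fin K))
    (a : {k // k ∈ S} → Fin H) : ∑ y, cpt θ M S y a = 1 :=
  sum_prod_eq_one fun j : {j // j ∈ M} => (hcpt j.1 _).2

theorem sum_ite_cpt_apply (hcpt : IsCPT θ) {M : Finset (Fin J)} {j : Fin J} (hj : j ∈ M)
    (S : Finset (Fin K)) (a : {k // k ∈ S} → Fin H) (v : Fin V) :
    ∑ y, (if y ⟨j, hj⟩ = v then cpt θ M S y a else 0) = θ j (extendA S a) v :=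
  sum_ite_prod_eq (fun j : {j // j ∈ M} => (hcpt j.1 _).2) ⟨j, hj⟩ v

theorem apply_extendA_restrict (hdep : DependsOnlyOnCo G θ) {j : Fin J} {S : Finset (Fin K)}
    (hj : co G j ⊆ S) (t : Fin K → Fin H) : θ j (extendA S (S.restrict t)) = θ j t :=
  hdep j _ _ fun k hk => by simp [extendA, hj hk]

theorem cpt_restrict_apply (hdep : DependsOnlyOnCo G θ) {M : Finset (Fin J)} {S : Finset (Fin K)}
    (hM : coS G M ⊆ S) (z : Fin J → Fin V) (t : Fin K → Fin H) :
    cpt θ M S (M.restrict z) (S.restrict t) = ∏ j ∈ M, θ j t (z j) := by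
  rw [← Finset.prod_coe_sort M]
  refine Finset.prod_congr rfl fun j _ => ?_
  rw [apply_extendA_restrict hdep ((Finset.subset_biUnion_of_mem (co G) j.2).trans hM)]
  rfl

theorem apply_eq_of_cpt_col_eq (hdep : DependsOnlyOnCo G θ) (hcpt : IsCPT θ)
    {M : Finset (Fin J)} {S : Finset (Fin K)} (hM : coS G M ⊆ S) {j : Fin J} (hj : j ∈ M)
    {t t' : Fin K → Fin H} (h : (cpt θ M S).col (S.restrict t) = (cpt θ M S).col (S.restrict t')) :
    θ j t = θ j t' := by
  have hjS := (Finset.subset_biUnion_of_mem (co G) hj).trans hM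
  funext v
  rw [← apply_extendA_restrict hdep hjS t, ← apply_extendA_restrict hdep hjS t',
    ← sum_ite_cpt_apply hcpt hj, ← sum_ite_cpt_apply hcpt hj]
  exact Finset.sum_congr rfl fun y _ => by rw [show cpt θ M S y _ = _ from congrFun h y]; rfl

theorem cpt_union_restrict_apply (hdep : DependsOnlyOnCo G θ) {S₁ S₂ : Finset (Fin J)}
    (hdisj : Disjoint S₁ S₂) {T₁ T₂ T : Finset (Fin K)} (h₁ : coS G S₁ ⊆ T₁)
    (h₂ : coS G S₂ ⊆ T₂) (h : coS G (S₁ ∪ S₂) ⊆ T) (z : Fin J → Fin V) (t : Fin K → Fin H) :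
    cpt θ (S₁ ∪ S₂) T ((S₁ ∪ S₂).restrict z) (T.restrict t) =
      cpt θ S₁ T₁ (S₁.restrict z) (T₁.restrict t) *
        cpt θ S₂ T₂ (S₂.restrict z) (T₂.restrict t) := by
  rw [cpt_restrict_apply hdep h, cpt_restrict_apply hdep h₁, cpt_restrict_apply hdep h₂,
    Finset.prod_union hdisj]

theorem linearIndependent_cpt_union_col (hdep : DependsOnlyOnCo G θ) [Nonempty (Fin V)]
    {S₁ S₂ : Finset (Fin J)} (hdisj : Disjoint S₁ S₂) {T₁ T : Finset (Fin K)}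
    (h₁ : coS G S₁ ⊆ T₁) (h₂ : coS G S₂ ⊆ T) (hT : T₁ ⊆ T) {ι : Type*} [Fintype ι]
    (x : ι → Fin K → Fin H) (hP : LinearIndependent ℝ (cpt θ S₁ T₁).col)
    (hQ : ∀ b, LinearIndepOn ℝ (fun i => (cpt θ S₂ T).col (T.restrict (x i)))
      ((fun i => T₁.restrict (x i)) ⁻¹' {b})) :
    LinearIndependent ℝ ((cpt θ (S₁ ∪ S₂) T).col ∘ fun i => T.restrict (x i)) := by
  classical
  have h : coS G (S₁ ∪ S₂) ⊆ T := by
    rw [coS, Finset.union_biUnion]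
    exact Finset.union_subset (h₁.trans hT) h₂
  have hli := linearIndependent_mul_of_linearIndepOn_fiber
    (Finset.exists_restrict_eq_of_disjoint hdisj) _ hP hQ
  simp_rw [Matrix.col_apply, ← cpt_union_restrict_apply hdep hdisj h₁ h₂ h] at hli
  exact .of_comp (LinearMap.funLeft ℝ ℝ fun z : Fin J → Fin V => (S₁ ∪ S₂).restrict z) hli

def configFamily (c : Finset (Fin K)) (t t' : Fin K → Fin H) :
    Option ({k // k ∈ c} → Fin H) → Fin K → Fin H :=
  fun i => i.elim t' fun b => c.piecewise (extendA c b) t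

theorem restrict_configFamily_some (c : Finset (Fin K)) (t t' : Fin K → Fin H)
    (b : {k // k ∈ c} → Fin H) : c.restrict (configFamily c t t' (some b)) = b :=
  funext fun k => by simp [configFamily, Finset.restrict, extendA, k.2]

theorem configFamily_some_restrict (c : Finset (Fin K)) (t t' : Fin K → Fin H) :
    configFamily c t t' (some (c.restrict t)) = t :=
  funext fun k => by by_cases hk : k ∈ c <;> simp [configFamily, extendA, hk]

theorem linearIndepOn_cpt_col_configFamily (hdep : DependsOnlyOnCo G θ) (hcpt : IsCPT θ)
    {M : Finset (Fin J)} {c S : Finset (Fin K)} (hM : coS G M ⊆ S) {j : Fin J} (hj : j ∈ M)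
    {t t' : Fin K → Fin H} (htt' : ∀ k ∈ c, t' k = t k) (hθ : θ j t ≠ θ j t')
    (b : {k // k ∈ c} → Fin H) :
    LinearIndepOn ℝ (fun i => (cpt θ M S).col (S.restrict (configFamily c t t' i)))
      ((fun i => c.restrict (configFamily c t t' i)) ⁻¹' {b}) := by
  have hfiber : ∀ i, c.restrict (configFamily c t t' i) = b →
      i = some b ∨ (i = none ∧ b = c.restrict t) := by
    rintro (_ | b') rfl
    · exact .inr ⟨rfl, funext fun k => htt' k k.2⟩
    · simp [restrict_configFamily_some]
  by_cases hb : b = c.restrict t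
  · subst hb
    refine (linearIndepOn_pair_of_sum_eq_one (Option.some_ne_none (c.restrict t))
      (sum_cpt_apply hcpt _ _ _) (sum_cpt_apply hcpt _ _ _) fun hcol => hθ ?_).mono ?_
    · rw [configFamily_some_restrict] at hcol
      exact apply_eq_of_cpt_col_eq hdep hcpt hM hj hcol
    · intro i hi
      rcases hfiber i hi with rfl | ⟨rfl, -⟩ <;> simp
  · refine ((linearIndepOn_singleton_iff ℝ).2 fun h0 => ?_).mono (s := {some b}) ?_
    · exact one_ne_zero ((sum_cpt_apply hcpt M S _).symm.trans
        (Finset.sum_eq_zero fun y _ => congrFun h0 y))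
    · intro i hi
      rcases hfiber i hi with rfl | ⟨-, rfl⟩
      · rfl
      · exact absurd rfl hb

end ConditionalProbabilityTable

theorem lemma2_rank_strict_general
    {J K V H : ℕ} [NeZero H]
    (G : Fin J → Fin K → Bool)
    (θ : Fin J → (Fin K → Fin H) → Fin V → ℝ)
    (hdep : DependsOnlyOnCo G θ) (hcpt : IsCPT θ) (hA2 : Assumption2 G θ)
    (S₁ S₂ : Finset (Fin J)) (hdisj : Disjoint S₁ S₂)
    (hsub : coS G S₁ ⊆ coS G S₂) (hne : coS G S₁ ≠ coS G S₂)
    (hrk : (cpt θ S₁ (coS G S₁)).rank = H ^ (coS G S₁).card) :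
    H ^ (coS G S₁).card < (cpt θ (S₁ ∪ S₂) (coS G S₂)).rank := by
  classical
  obtain ⟨k₀, hk₀S₂, hk₀S₁⟩ := Finset.exists_of_ssubset (hsub.ssubset_of_ne hne)
  obtain ⟨j₀, hj₀, hk₀⟩ := Finset.mem_biUnion.mp hk₀S₂
  obtain ⟨a, h, h', hθ⟩ := hA2 j₀ k₀ hk₀
  obtain ⟨v₀, -⟩ := Function.ne_iff.mp hθ
  have : Nonempty (Fin V) := ⟨v₀⟩
  have htt' : ∀ k ∈ coS G S₁, Function.update a k₀ h' k = Function.update a k₀ h k :=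
    fun k hk => by simp [ne_of_mem_of_not_mem hk hk₀S₁]
  have hli := linearIndependent_cpt_union_col hdep hdisj le_rfl le_rfl hsub _
    (Matrix.linearIndependent_col_of_rank_eq_card (by simpa using hrk))
    (linearIndepOn_cpt_col_configFamily hdep hcpt le_rfl hj₀ htt' hθ)
  calc H ^ (coS G S₁).card < Fintype.card (Option ({k // k ∈ coS G S₁} → Fin H)) := by simp
    _ ≤ _ := Matrix.card_le_rank_of_linearIndependent_col_comp hli

/-- Lemma 2: if `co(S₁) ⊊ co(S₂)` and `P(Y_{S₁} | A_{co(S₁)})` has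
full column rank, then `P(Y_{S₁ ∪ S₂} | A_{co(S₂)})` has rank exceeding
`H^{|co(S₁)|}`. -/
theorem lemma2_rank_strict
    {J K V H : ℕ} [NeZero H] (hH : 2 ≤ H) (hVH : H ≤ V)
    (G : Fin J → Fin K → Bool)
    (θ : Fin J → (Fin K → Fin H) → Fin V → ℝ)
    (hdep : DependsOnlyOnCo G θ) (hcpt : IsCPT θ) (hA2 : Assumption2 G θ)
    (S₁ S₂ : Finset (Fin J)) (hdisj : Disjoint S₁ S₂)
    (hsub : coS G S₁ ⊆ coS G S₂) (hne : coS G S₁ ≠ coS G S₂)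
    (hrk : (cpt θ S₁ (coS G S₁)).rank = H ^ (coS G S₁).card) :
    H ^ (coS G S₁).card < (cpt θ (S₁ ∪ S₂) (coS G S₂)).rank :=
  lemma2_rank_strict_general G θ hdep hcpt hA2 S₁ S₂ hdisj hsub hne hrk

end LBGM
end

section
/- Let R ≥ 1, L ≥ 2, and let F ∈ ℝ^{n×R} have full column rank R. Let E_1,…,E_L ∈ ℝ^{m×R} be matrices each of whose columns has entries summing to 1. Suppose there exist ℓ_1, ℓ_2 ∈ [L] and r ∈ [R] such that the r-th column of E_{ℓ_1} differs from the r-th column of E_{ℓ_2}. Then the nm × RL block matrix (F ⊙ E_1 | F ⊙ E_2 | ⋯ | F ⊙ E_L) has rank at least R + 1. -/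
open Matrix MeasureTheory

namespace LBGM

/-- block matrix of Khatri–Rao products `(F⊙E₁ | ⋯ | F⊙E_L)` has
rank at least `R+1` when `F` has full column rank, the columns of each `E_ℓ`
sum to one, and two blocks differ in some column. -/
theorem block_khatriRao_rank
    {n m R L : ℕ} (hR : 1 ≤ R) (hL : 2 ≤ L)
    (F : Matrix (Fin n) (Fin R) ℝ) (hF : F.rank = R)
    (E : Fin L → Matrix (Fin m) (Fin R) ℝ)
    (hsum : ∀ (ℓ : Fin L) (r : Fin R), ∑ i, E ℓ i r = 1)
    (hdiff : ∃ (ℓ₁ ℓ₂ : Fin L) (r : Fin R),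
      (fun i => E ℓ₁ i r) ≠ (fun i => E ℓ₂ i r)) :
    R + 1 ≤
      (Matrix.of fun (p : Fin n × Fin m) (q : Fin L × Fin R) =>
        F p.1 q.2 * E q.1 p.2 q.2).rank := by
  obtain ⟨ℓ₁, ℓ₂, r₀, hd⟩ := hdiff
  set M : Matrix (Fin n × Fin m) (Fin L × Fin R) ℝ :=
    Matrix.of fun p q => F p.1 q.2 * E q.1 p.2 q.2 with hM
  have hker : ∀ v, F.mulVec v = 0 → v = 0 := by
    rw [← Matrix.ker_mulVecLin_eq_bot_iff]
    have h := F.mulVecLin.finrank_range_add_finrank_ker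
    rw [show Module.finrank ℝ (LinearMap.range F.mulVecLin) = R from hF] at h
    simp [Module.finrank_pi] at h
    exact h
  have hFcol : ∃ a : Fin n, F a r₀ ≠ 0 := by
    by_contra h
    push_neg at h
    have h0 := hker (Pi.single r₀ 1) (by
      funext a
      simp [Matrix.mulVec, dotProduct, Pi.single_apply, h])
    have := congrFun h0 r₀
    simp at this
  obtain ⟨a₀, ha₀⟩ := hFcol
  obtain ⟨j₀, hj₀⟩ := Function.ne_iff.mp hd
  set g : Fin (R + 1) → Fin L × Fin R := Fin.snoc (fun r => (ℓ₁, r)) (ℓ₂, r₀) with hg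
  have hli : LinearIndependent ℝ (fun i : Fin (R + 1) => Mᵀ (g i)) := by
    rw [Fintype.linearIndependent_iff]
    intro c hc
    have hc' : ∀ p : Fin n × Fin m,
        ∑ i, c i * (F p.1 (g i).2 * E (g i).1 p.2 (g i).2) = 0 := by
      intro p
      have := congrFun hc p
      simpa [hM, Matrix.transpose_apply] using this
    have hw : (fun r => c (Fin.castSucc r) + if r = r₀ then c (Fin.last R) else 0) = 0 := by
      apply hker
      funext a
      have h1 : ∑ i : Fin (R + 1), ∑ j : Fin m,
          c i * (F a (g i).2 * E (g i).1 j (g i).2) = 0 := by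
        rw [Finset.sum_comm]
        simp only [Finset.sum_congr rfl (fun j _ => hc' (a, j)), Finset.sum_const_zero]
      have h2 : ∑ i : Fin (R + 1), c i * F a (g i).2 = 0 := by
        rw [← h1]
        refine Finset.sum_congr rfl (fun i _ => ?_)
        rw [show ∑ j : Fin m, c i * (F a (g i).2 * E (g i).1 j (g i).2)
            = c i * F a (g i).2 * ∑ j : Fin m, E (g i).1 j (g i).2 by
          rw [Finset.mul_sum]; exact Finset.sum_congr rfl (fun j _ => by ring)]
        rw [hsum, mul_one]
      rw [Fin.sum_univ_castSucc] at h2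
      simp only [hg, Fin.snoc_castSucc, Fin.snoc_last] at h2
      simp only [Matrix.mulVec, dotProduct, mul_add, mul_ite, mul_zero,
        Finset.sum_add_distrib, Finset.sum_ite_eq', Finset.mem_univ, if_true, Pi.zero_apply]
      rw [← h2]
      rw [Finset.sum_congr rfl (fun r _ => mul_comm (F a r) (c (Fin.castSucc r)))]
      ring
    have hcr : ∀ r : Fin R, r ≠ r₀ → c (Fin.castSucc r) = 0 := by
      intro r hr
      have := congrFun hw r
      simpa [hr] using this
    have hcr₀ : c (Fin.castSucc r₀) = - c (Fin.last R) := by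
      have := congrFun hw r₀
      simp at this
      linarith
    have hβ : c (Fin.last R) = 0 := by
      have h4 := hc' (a₀, j₀)
      rw [Fin.sum_univ_castSucc] at h4
      simp only [hg, Fin.snoc_castSucc, Fin.snoc_last] at h4
      rw [Finset.sum_eq_single r₀ (fun r _ hr => by rw [hcr r hr]; ring) (by simp)] at h4
      rw [hcr₀] at h4
      have h5 : c (Fin.last R) * (F a₀ r₀ * (E ℓ₂ j₀ r₀ - E ℓ₁ j₀ r₀)) = 0 := by
        linear_combination h4
      rcases mul_eq_zero.mp h5 with h6 | h6
      · exact h6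
      · rcases mul_eq_zero.mp h6 with h7 | h7
        · exact absurd h7 ha₀
        · exact absurd (by linarith : E ℓ₁ j₀ r₀ = E ℓ₂ j₀ r₀) hj₀
    intro i
    refine Fin.lastCases ?_ ?_ i
    · exact hβ
    · intro r
      by_cases hr : r = r₀
      · rw [hr, hcr₀, hβ, neg_zero]
      · exact hcr r hr
  have hspan : Submodule.span ℝ (Set.range fun i => Mᵀ (g i)) ≤
      LinearMap.range M.mulVecLin := by
    rw [Matrix.range_mulVecLin]
    exact Submodule.span_mono (Set.range_comp_subset_range g Mᵀ)
  calc R + 1 = Module.finrank ℝ (Submodule.span ℝ (Set.range fun i => Mᵀ (g i))) := by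
        rw [finrank_span_eq_card hli, Fintype.card_fin]
    _ ≤ Module.finrank ℝ (LinearMap.range M.mulVecLin) := Submodule.finrank_mono hspan
    _ = M.rank := rfl

end LBGM
end
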